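/- arXiv:1104.0870 — 2 statements merged into one kernel-verified Lean document; each statement's English description precedes it below -/
import Mathlib

section
/- Let h be a polynomial of degree at most N that is either an even polynomial or an odd polynomial, with distinct roots. Then the even-odd points in the fibre X(h) = Wr^{−1}(h) are exactly the points of X(h) fixed by the involution of X induced by the element diag(−1,1) ∈ PGL_2(ℂ) (the substitution z ↦ −z). -/
open Polynomial

noncomputable section

/-! ### The Grassmannian `X = Gr(d, ℂ_{n-1}[z])` and the Wronski map -/

/-- The Wronskian determinant of a `d`-tuple of polynomials. -/
def wronskDet (d : ℕ) (f : Fin d → Polynomial ℂ) : Polynomial ℂ :=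
  Matrix.det (Matrix.of fun i j : Fin d =>
    (fun p : Polynomial ℂ => Polynomial.derivative p)^[(j : ℕ)] (f i))

/-- `x` is a point of the Grassmannian `Gr(d, ℂ_{n-1}[z])`. -/
def IsGrPoint (n d : ℕ) (x : Submodule ℂ (Polynomial ℂ)) : Prop :=
  x ≤ Polynomial.degreeLT ℂ n ∧ Module.finrank ℂ x = d

/-- `x` lies in the fibre of the Wronski map over `h` (an element of the
projective space `ℙ(ℂ_N[z])`, i.e. the Wronskian of a basis of `x` is a nonzero
scalar multiple of `h`). -/
def InFibre (d : ℕ) (x : Submodule ℂ (Polynomial ℂ)) (h : Polynomial ℂ) : Prop :=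
  ∃ (f : Fin d → Polynomial ℂ) (c : ℂ), c ≠ 0 ∧ LinearIndependent ℂ f ∧
    Submodule.span ℂ (Set.range f) = x ∧ wronskDet d f = c • h

/-- The linear substitution `f(z) ↦ f(c·z)` on polynomials. -/
def rotMap (c : ℂ) : Polynomial ℂ →ₗ[ℂ] Polynomial ℂ :=
  (Polynomial.aeval (Polynomial.C c * Polynomial.X) :
    Polynomial ℂ →ₐ[ℂ] Polynomial ℂ).toLinearMap

/-- `x` is fixed by the cyclic group `C_r ⊂ PGL₂(ℂ)` of classes of
`diag(e^{πij/r}, e^{-πij/r})`, `j = 0, …, r-1`; the induced (projective) action on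
`Gr(d, ℂ_{n-1}[z])` is via the substitutions `z ↦ e^{-2πij/r} z`. -/
def CrFixed (r : ℕ) (x : Submodule ℂ (Polynomial ℂ)) : Prop :=
  ∀ j : Fin r,
    Submodule.map
      (rotMap (Complex.exp (-(2 * (Real.pi : ℂ) * Complex.I * ((j : ℕ) : ℂ)) / (r : ℂ)))) x = x

/-- The linear map `f(z) ↦ z^{n-1} f(1/z)` on `ℂ_{n-1}[z]`,
realizing the reflection `(0 1; 1 0) ∈ PGL₂(ℂ)`. -/
def reflectMap (n : ℕ) : Polynomial ℂ →ₗ[ℂ] Polynomial ℂ :=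
  ∑ k ∈ Finset.range n,
    (Polynomial.lcoeff ℂ k).smulRight ((Polynomial.X : Polynomial ℂ) ^ (n - 1 - k))

/-- `x` is fixed by the dihedral group `D_r ⊂ PGL₂(ℂ)` generated by `C_r` and the
reflection `z ↦ 1/z`. -/
def DrFixed (n r : ℕ) (x : Submodule ℂ (Polynomial ℂ)) : Prop :=
  CrFixed r x ∧ Submodule.map (reflectMap n) x = x

/-! ### Partitions, Richardson varieties, compatibility -/

/-- A partition with at most `d` parts, each of size at most `w`
(recorded as a function `ℕ → ℕ` vanishing from index `d` on; part `i` (0-based)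
is the `(i+1)`-st part). -/
structure PartitionIn (d w : ℕ) where
  part : ℕ → ℕ
  antitone : ∀ ⦃i j : ℕ⦄, i ≤ j → part j ≤ part i
  le_w : ∀ i, part i ≤ w
  eq_zero : ∀ i, d ≤ i → part i = 0

/-- The size `|λ|` of a partition. -/
def PartitionIn.size {d w : ℕ} (lam : PartitionIn d w) : ℕ :=
  ∑ i ∈ Finset.range d, lam.part i

/-- Containment `μ ⊆ λ` of partitions. -/
def SubPartition {d w : ℕ} (mu lam : PartitionIn d w) : Prop :=
  ∀ i, mu.part i ≤ lam.part i

/-- The full rectangular partition `(w)^d`. -/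
def rectPart (d w : ℕ) : PartitionIn d w :=
  { part := fun i => if i < d then w else 0
    antitone := by
      intro i j hij
      by_cases hj : j < d
      · have hi : i < d := lt_of_le_of_lt hij hj
        simp [hi, hj]
      · simp [hj]
    le_w := by intro i; by_cases hi : i < d <;> simp [hi]
    eq_zero := by intro i hi; simp [Nat.not_lt.mpr hi] }

/-- The empty partition. -/
def zeroPart (d w : ℕ) : PartitionIn d w :=
  { part := fun _ => 0
    antitone := by intro i j _; exact le_rfl
    le_w := fun _ => Nat.zero_le _
    eq_zero := fun _ _ => rfl }

/-- The flag `F_i = z^{n-i} ℂ_{i-1}[z]` inside `ℂ_{n-1}[z]`. -/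
def Fflag (n i : ℕ) : Submodule ℂ (Polynomial ℂ) :=
  Polynomial.degreeLT ℂ n ⊓
    Submodule.restrictScalars ℂ (Ideal.span {(Polynomial.X : Polynomial ℂ) ^ (n - i)})

/-- The flag `F̃_i = ℂ_{i-1}[z]`. -/
def Ftilde (i : ℕ) : Submodule ℂ (Polynomial ℂ) := Polynomial.degreeLT ℂ i

/-- Membership in the Richardson variety `X_{λ/μ}`. -/
def InRichardson (n d : ℕ) (lam mu : PartitionIn d (n - d))
    (x : Submodule ℂ (Polynomial ℂ)) : Prop :=
  ∀ i : ℕ, i < d →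
    i + 1 ≤ Module.finrank ℂ ↥(x ⊓ Fflag n (n - d - mu.part i + (i + 1))) ∧
    i + 1 ≤ Module.finrank ℂ ↥(x ⊓ Ftilde (lam.part (d - 1 - i) + (i + 1)))

/-- The Richardson variety `X_{λ/μ}` is compatible with the polynomial `h`:
`μ ⊆ λ`, `|λ| = deg h` and `|μ| = mindeg h`. -/
def Compatible (n d : ℕ) (lam mu : PartitionIn d (n - d)) (h : Polynomial ℂ) : Prop :=
  SubPartition mu lam ∧ lam.size = h.natDegree ∧ mu.size = h.rootMultiplicity 0

/-! ### Ribbons and tableaux -/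

/-- Two boxes (row, column) are adjacent. -/
def BoxAdj (p q : ℕ × ℕ) : Prop :=
  (p.1 = q.1 ∧ (p.2 + 1 = q.2 ∨ q.2 + 1 = p.2)) ∨
  (p.2 = q.2 ∧ (p.1 + 1 = q.1 ∨ q.1 + 1 = p.1))

/-- A set of boxes is an `r`-ribbon: it has `r` boxes, is connected,
and contains no 2×2 square. -/
def IsRibbon (r : ℕ) (S : Set (ℕ × ℕ)) : Prop :=
  S.ncard = r ∧
  (∀ p ∈ S, ∀ q ∈ S, Relation.ReflTransGen (fun u v => u ∈ S ∧ v ∈ S ∧ BoxAdj u v) p q) ∧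
  ¬ ∃ i j : ℕ, (i, j) ∈ S ∧ (i + 1, j) ∈ S ∧ (i, j + 1) ∈ S ∧ (i + 1, j + 1) ∈ S

/-- The box `(i,j)` (0-based row and column) lies in the skew diagram `λ/μ`. -/
def InShape {d w : ℕ} (lam mu : PartitionIn d w) (i j : ℕ) : Prop :=
  i < d ∧ mu.part i ≤ j ∧ j < lam.part i

/-- `E` is a standard `r`-ribbon tableau of skew shape `λ/μ` with entries `1, …, ℓ`
(recorded as a function on boxes, normalized to `0` off the shape). -/
def IsSRT {d w : ℕ} (r ℓ : ℕ) (lam mu : PartitionIn d w) (E : ℕ → ℕ → ℕ) : Prop :=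
  (∀ i j, ¬ InShape lam mu i j → E i j = 0) ∧
  (∀ i j, InShape lam mu i j → 1 ≤ E i j ∧ E i j ≤ ℓ) ∧
  (∀ i j j', InShape lam mu i j → InShape lam mu i j' → j ≤ j' → E i j ≤ E i j') ∧
  (∀ i i' j, InShape lam mu i j → InShape lam mu i' j → i ≤ i' → E i j ≤ E i' j) ∧
  (∀ k, 1 ≤ k → k ≤ ℓ → IsRibbon r {p : ℕ × ℕ | InShape lam mu p.1 p.2 ∧ E p.1 p.2 = k})

/-- A tableau (with boxes inside the `d × w` rectangle and largest entry `m`) is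
rotationally invariant: it is fixed by rotating `180°` inside the rectangle and
replacing each entry `k` by `m + 1 - k`. -/
def RotInvariant {d w : ℕ} (m : ℕ) (lam mu : PartitionIn d w) (E : ℕ → ℕ → ℕ) : Prop :=
  ∀ i j, InShape lam mu i j →
    InShape lam mu (d - 1 - i) (w - 1 - j) ∧
    E (d - 1 - i) (w - 1 - j) = m + 1 - E i j

/-- For `ℓ` even: a tableau of shape `λ/μ` with entries `1, …, ℓ-1`, in which the
boxes with entry `k ≠ ℓ/2` form `r`-ribbons and the boxes with entry `ℓ/2`
form a `2r`-ribbon. -/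
def IsHatSRT {d w : ℕ} (r ℓ : ℕ) (lam mu : PartitionIn d w) (E : ℕ → ℕ → ℕ) : Prop :=
  (∀ i j, ¬ InShape lam mu i j → E i j = 0) ∧
  (∀ i j, InShape lam mu i j → 1 ≤ E i j ∧ E i j ≤ ℓ - 1) ∧
  (∀ i j j', InShape lam mu i j → InShape lam mu i j' → j ≤ j' → E i j ≤ E i j') ∧
  (∀ i i' j, InShape lam mu i j → InShape lam mu i' j → i ≤ i' → E i j ≤ E i' j) ∧
  (∀ k, 1 ≤ k → k ≤ ℓ - 1 → k ≠ ℓ / 2 →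
    IsRibbon r {p : ℕ × ℕ | InShape lam mu p.1 p.2 ∧ E p.1 p.2 = k}) ∧
  IsRibbon (2 * r) {p : ℕ × ℕ | InShape lam mu p.1 p.2 ∧ E p.1 p.2 = ℓ / 2}

/-! ### Rectangular standard Young tableaux, promotion and evacuation -/

/-- `E` is a standard Young tableau of rectangular shape `d × w`
(normalized to `0` outside the rectangle). -/
def IsSYT (d w : ℕ) (E : ℕ → ℕ → ℕ) : Prop :=
  (∀ i j, d ≤ i ∨ w ≤ j → E i j = 0) ∧
  (∀ i j, i < d → j < w → 1 ≤ E i j ∧ E i j ≤ d * w) ∧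
  (∀ i j, i < d → j + 1 < w → E i j < E i (j + 1)) ∧
  (∀ i j, i + 1 < d → j < w → E i j < E (i + 1) j) ∧
  (∀ m, 1 ≤ m → m ≤ d * w → ∃ i j, i < d ∧ j < w ∧ E i j = m)

/-- One step of the jeu de taquin slide of the empty box, restricted to the
subtableau of entries `≤ i₀`: the empty box swaps with the smaller of its east
and south neighbours (among entries `≤ i₀`), if any. -/
def slideStep (d w i₀ : ℕ) (E : ℕ → ℕ → ℕ) (p : ℕ × ℕ) : ℕ × ℕ :=
  if (p.1 + 1 < d ∧ E (p.1 + 1) p.2 ≤ i₀) ∧ (p.2 + 1 < w ∧ E p.1 (p.2 + 1) ≤ i₀) then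
    (if E (p.1 + 1) p.2 < E p.1 (p.2 + 1) then (p.1 + 1, p.2) else (p.1, p.2 + 1))
  else if p.1 + 1 < d ∧ E (p.1 + 1) p.2 ≤ i₀ then (p.1 + 1, p.2)
  else if p.2 + 1 < w ∧ E p.1 (p.2 + 1) ≤ i₀ then (p.1, p.2 + 1)
  else p

/-- The path of the empty box in the jeu de taquin slide, starting in the
northwest corner. -/
def slidePath (d w i₀ : ℕ) (E : ℕ → ℕ → ℕ) : ℕ → ℕ × ℕ
  | 0 => (0, 0)
  | k + 1 => slideStep d w i₀ E (slidePath d w i₀ E k)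

/-- Promotion restricted to the entries `1, …, i₀` (the operator `𝑗_{i₀}`):
delete the entry `1`, slide the empty box through the entries `≤ i₀`, decrement
those entries by one and place `i₀` in the final empty box. -/
def partialPromo (d w i₀ : ℕ) (E : ℕ → ℕ → ℕ) : ℕ → ℕ → ℕ := fun i j =>
  if d ≤ i ∨ w ≤ j then 0
  else if (i, j) = slidePath d w i₀ E i₀ then i₀
  else if slidePath d w i₀ E (i + j) = (i, j) then
    E (slidePath d w i₀ E (i + j + 1)).1 (slidePath d w i₀ E (i + j + 1)).2 - 1
  else if E i j ≤ i₀ then E i j - 1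
  else E i j

/-- Jeu de taquin promotion `𝑗` on fillings of the `d × w` rectangle. -/
def promo (d w : ℕ) (E : ℕ → ℕ → ℕ) : ℕ → ℕ → ℕ := partialPromo d w (d * w) E

/-- `evacAux d w i = 𝑗_1 ∘ 𝑗_2 ∘ ⋯ ∘ 𝑗_i`. -/
def evacAux (d w : ℕ) : ℕ → (ℕ → ℕ → ℕ) → (ℕ → ℕ → ℕ)
  | 0, E => E
  | i + 1, E => evacAux d w i (partialPromo d w (i + 1) E)

/-- Evacuation `𝑒 = 𝑗_1 ∘ 𝑗_2 ∘ ⋯ ∘ 𝑗_N` on fillings of the `d × w` rectangle. -/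
def evac (d w : ℕ) (E : ℕ → ℕ → ℕ) : ℕ → ℕ → ℕ := evacAux d w (d * w) E

/-- The `C_r`-fixed polynomial `z^m (z^r + h_1) ⋯ (z^r + h_ℓ)`. -/
def crPoly (r m ℓ : ℕ) (hs : Fin ℓ → ℂ) : Polynomial ℂ :=
  Polynomial.X ^ m * ∏ i : Fin ℓ, (Polynomial.X ^ r + Polynomial.C (hs i))

/-- The product `∏ (z^r + a_i)(z^r + a_i⁻¹)` of generic inverse pairs. -/
def pairsPoly (r t : ℕ) (a : Fin t → ℂ) : Polynomial ℂ :=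
  ∏ i : Fin t,
    ((Polynomial.X ^ r + Polynomial.C (a i)) * (Polynomial.X ^ r + Polynomial.C (a i)⁻¹))

/-- A `D_r`-fixed polynomial of type (1). -/
def type1poly (r m t : ℕ) (ε : ℂ) (a : Fin t → ℂ) : Polynomial ℂ :=
  Polynomial.X ^ m * (Polynomial.X ^ r + Polynomial.C ε) * pairsPoly r t a

/-- A `D_r`-fixed polynomial of type (2). -/
def type2poly (r m t : ℕ) (a : Fin t → ℂ) : Polynomial ℂ :=
  Polynomial.X ^ m * pairsPoly r t a

/-- A `D_r`-fixed polynomial of type (3). -/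
def type3poly (r m t : ℕ) (a : Fin t → ℂ) : Polynomial ℂ :=
  Polynomial.X ^ m * (Polynomial.X ^ r + 1) * (Polynomial.X ^ r - 1) * pairsPoly r t a

/-- `x` is an even-odd point: it has a basis each of whose members is an even or
an odd polynomial. -/
def IsEvenOddPoint (d : ℕ) (x : Submodule ℂ (Polynomial ℂ)) : Prop :=
  ∃ f : Fin d → Polynomial ℂ, LinearIndependent ℂ f ∧
    Submodule.span ℂ (Set.range f) = x ∧
    ∀ i, (f i).comp (-Polynomial.X) = f i ∨ (f i).comp (-Polynomial.X) = -(f i)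

/-- `x` is a real point: it has a basis of polynomials with real coefficients. -/
def IsRealPoint (d : ℕ) (x : Submodule ℂ (Polynomial ℂ)) : Prop :=
  ∃ f : Fin d → Polynomial ℂ, LinearIndependent ℂ f ∧
    Submodule.span ℂ (Set.range f) = x ∧
    ∀ i k, ((f i).coeff k).im = 0

/-- The Möbius action of a matrix on `ℂℙ¹ = ℂ ∪ {∞}` (modelled by `Option ℂ`,
with `none` playing the role of `∞`). -/
def mobP1 (M : Matrix (Fin 2) (Fin 2) ℂ) : Option ℂ → Option ℂ := fun p =>
  match p with
  | none => if M 1 0 = 0 then none else some (M 0 0 / M 1 0)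
  | some a =>
      if M 1 0 * a + M 1 1 = 0 then none
      else some ((M 0 0 * a + M 0 1) / (M 1 0 * a + M 1 1))

/-- The action of a matrix `φ` on `ℂ_{n-1}[z] `:
`(φf)(z) = (φ₂₁ z + φ₁₁)^{n-1} f((φ₂₂ z + φ₁₂)/(φ₂₁ z + φ₁₁))`. -/
def mobiusMap (n : ℕ) (M : Matrix (Fin 2) (Fin 2) ℂ) : Polynomial ℂ →ₗ[ℂ] Polynomial ℂ :=
  ∑ k ∈ Finset.range n, (Polynomial.lcoeff ℂ k).smulRight
    ((Polynomial.C (M 1 1) * Polynomial.X + Polynomial.C (M 0 1)) ^ k *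
     (Polynomial.C (M 1 0) * Polynomial.X + Polynomial.C (M 0 0)) ^ (n - 1 - k))

/-- The polynomial `∏_{a_i ≠ ∞} (z + a_i)` attached to a tuple of points of `ℂℙ¹`. -/
def rootsPoly (N : ℕ) (a : Fin N → Option ℂ) : Polynomial ℂ :=
  ∏ i : Fin N, (a i).elim 1 (fun c => Polynomial.X + Polynomial.C c)

/-- The eigenspace `M_k`: the span of the monomials `z^j`, `j < n`, `j ≡ k (mod r)`. -/
def eigSpace (n r : ℕ) (k : Fin r) : Submodule ℂ (Polynomial ℂ) :=
  Submodule.span ℂ {p : Polynomial ℂ | ∃ j : ℕ, j < n ∧ j % r = (k : ℕ) ∧ p = Polynomial.X ^ j}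

/-- The operator `c` on `ℂ_{n-1}[z]` with `c · z^k = ζ^{n-1-2k} z^k`, `ζ = e^{πi/r}`. -/
def cMap (n r : ℕ) : Polynomial ℂ →ₗ[ℂ] Polynomial ℂ :=
  (Complex.exp ((Real.pi : ℂ) * Complex.I / (r : ℂ))) ^ (n - 1) •
    (Polynomial.aeval
        (Polynomial.C (((Complex.exp ((Real.pi : ℂ) * Complex.I / (r : ℂ))) ^ 2)⁻¹) *
          Polynomial.X) :
      Polynomial ℂ →ₐ[ℂ] Polynomial ℂ).toLinearMap

/-- `μ` is obtained from `λ` by removing a single `r`-ribbon. -/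
def RibbonStep {d w : ℕ} (r : ℕ) (lam mu : PartitionIn d w) : Prop :=
  SubPartition mu lam ∧ IsRibbon r {p : ℕ × ℕ | InShape lam mu p.1 p.2}

/-- `λ` and `μ` have the same `r`-core: they are related by the equivalence
relation generated by removal of a single `r`-ribbon. -/
def RibbonEquiv {d w : ℕ} (r : ℕ) (lam mu : PartitionIn d w) : Prop :=
  Relation.EqvGen (fun a b => RibbonStep r a b) lam mu

/-- `κ` is an `r`-core: no `r`-ribbon can be removed from it. -/
def IsRCore {d w : ℕ} (r : ℕ) (kappa : PartitionIn d w) : Prop :=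
  ¬ ∃ mu : PartitionIn d w, RibbonStep r kappa mu

/-- The column set `J(λ) = {i - 1 + λ^{d+1-i} : 1 ≤ i ≤ d}` of the Plücker
coordinate `p_λ`, as a function of `i`. -/
def pluckerIndex {d w : ℕ} (lam : PartitionIn d w) (i : Fin d) : ℕ :=
  (i : ℕ) + lam.part (d - 1 - (i : ℕ))

/-- The Plücker coordinate `p_λ(x)` of `x` is nonzero (this does not depend on
the choice of basis of `x`). -/
def PluckerNonzero (d : ℕ) {w : ℕ} (lam : PartitionIn d w)
    (x : Submodule ℂ (Polynomial ℂ)) : Prop :=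
  ∃ f : Fin d → Polynomial ℂ, LinearIndependent ℂ f ∧
    Submodule.span ℂ (Set.range f) = x ∧
    Matrix.det (Matrix.of fun i i' : Fin d => (f i).coeff (pluckerIndex lam i')) ≠ 0

end

lemma rotMap_neg_one (p : Polynomial ℂ) : rotMap (-1) p = p.comp (-X) := by
  simp [rotMap, Polynomial.aeval_def, Polynomial.comp, map_neg]

lemma rotMap_invol (p : Polynomial ℂ) : rotMap (-1) (rotMap (-1) p) = p := by
  rw [rotMap_neg_one, rotMap_neg_one, Polynomial.comp_assoc]
  simp

theorem statement10' (d n : ℕ)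
    (x : Submodule ℂ (Polynomial ℂ)) (hgr : IsGrPoint n d x) :
    (IsEvenOddPoint d x ↔ Submodule.map (rotMap (-1)) x = x) := by
  set σ := rotMap (-1) with hσdef
  constructor
  · rintro ⟨f, hli, hspan, heo'⟩
    have hmem : ∀ i, σ (f i) ∈ x := by
      intro i
      rcases heo' i with h1 | h1
      · rw [hσdef, rotMap_neg_one, h1, ← hspan]
        exact Submodule.subset_span ⟨i, rfl⟩
      · rw [hσdef, rotMap_neg_one, h1, ← hspan]
        exact Submodule.neg_mem _ (Submodule.subset_span ⟨i, rfl⟩)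
    apply le_antisymm
    · rw [← hspan, Submodule.map_span, Submodule.span_le]
      rintro _ ⟨_, ⟨i, rfl⟩, rfl⟩
      simp only [SetLike.mem_coe, hspan]
      exact hmem i
    · nth_rewrite 1 [← hspan]
      rw [Submodule.span_le]
      rintro _ ⟨i, rfl⟩
      exact ⟨σ (f i), hmem i, rotMap_invol (f i)⟩
  · intro hmap
    haveI : FiniteDimensional ℂ (degreeLT ℂ n) :=
      Module.Finite.equiv (degreeLTEquiv ℂ n).symm
    haveI hfx : FiniteDimensional ℂ x := Submodule.finiteDimensional_of_le hgr.1
    set A : Submodule ℂ (Polynomial ℂ) := x ⊓ LinearMap.ker (σ - LinearMap.id) with hA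
    set B : Submodule ℂ (Polynomial ℂ) := x ⊓ LinearMap.ker (σ + LinearMap.id) with hB
    haveI : FiniteDimensional ℂ A := Submodule.finiteDimensional_of_le inf_le_left
    haveI : FiniteDimensional ℂ B := Submodule.finiteDimensional_of_le inf_le_left
    have hAeig : ∀ p ∈ A, σ p = p := by
      intro p hp
      have := (Submodule.mem_inf.mp hp).2
      rw [LinearMap.mem_ker, LinearMap.sub_apply, LinearMap.id_apply, sub_eq_zero] at this
      exact this
    have hBeig : ∀ p ∈ B, σ p = -p := by
      intro p hp
      have := (Submodule.mem_inf.mp hp).2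
      rw [LinearMap.mem_ker, LinearMap.add_apply, LinearMap.id_apply, add_eq_zero_iff_eq_neg] at this
      exact this
    have hsup : A ⊔ B = x := by
      apply le_antisymm (sup_le inf_le_left inf_le_left)
      intro v hv
      have hσv : σ v ∈ x := hmap ▸ Submodule.mem_map_of_mem hv
      have hdecomp : v = (2⁻¹ : ℂ) • (v + σ v) + (2⁻¹ : ℂ) • (v - σ v) := by
        rw [smul_add, smul_sub]
        rw [show ∀ a b : Polynomial ℂ, (a + b) + (a - b) = (2:ℂ) • a + ((b - b):Polynomial ℂ)
          from fun a b => by rw [two_smul]; ring]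
        rw [sub_self, add_zero, smul_smul]
        norm_num
      rw [hdecomp]
      refine Submodule.add_mem _ (Submodule.mem_sup_left ?_) (Submodule.mem_sup_right ?_)
      · refine Submodule.mem_inf.mpr ⟨Submodule.smul_mem _ _ (Submodule.add_mem _ hv hσv), ?_⟩
        rw [LinearMap.mem_ker, LinearMap.sub_apply, LinearMap.id_apply, sub_eq_zero,
          map_smul, map_add, hσdef, rotMap_invol, add_comm]
      · refine Submodule.mem_inf.mpr ⟨Submodule.smul_mem _ _ (Submodule.sub_mem _ hv hσv), ?_⟩
        rw [LinearMap.mem_ker, LinearMap.add_apply, LinearMap.id_apply,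
          map_smul, map_sub, hσdef, rotMap_invol, ← smul_add]
        rw [show σ v - v + (v - σ v) = 0 from by ring]
        rw [smul_zero]
    have hinf : A ⊓ B = ⊥ := by
      rw [eq_bot_iff]
      intro v hv
      have h1 := hAeig v hv.1
      have h2 := hBeig v hv.2
      have hveq : v = -v := h1.symm.trans h2
      have : (2 : ℂ) • v = 0 := by
        rw [two_smul]
        nth_rewrite 2 [hveq]
        exact add_neg_cancel v
      rcases smul_eq_zero.mp this with h | h
      · norm_num at h
      · simpa using h
    have hrank : Module.finrank ℂ A + Module.finrank ℂ B = d := by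
      have := Submodule.finrank_sup_add_finrank_inf_eq A B
      rw [hsup, hinf] at this
      simpa [hgr.2] using this.symm
    set bA := Module.finBasis ℂ A with hbA
    set bB := Module.finBasis ℂ B with hbB
    have hliA : LinearIndependent ℂ (fun i => (bA i : Polynomial ℂ)) :=
      bA.linearIndependent.map' A.subtype (Submodule.ker_subtype A)
    have hliB : LinearIndependent ℂ (fun i => (bB i : Polynomial ℂ)) :=
      bB.linearIndependent.map' B.subtype (Submodule.ker_subtype B)
    have hspanA : Submodule.span ℂ (Set.range fun i => (bA i : Polynomial ℂ)) = A := by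
      have h1 : Set.range (fun i => (bA i : Polynomial ℂ)) = A.subtype '' Set.range bA := by
        rw [← Set.range_comp]; rfl
      rw [h1, Submodule.span_image, bA.span_eq, Submodule.map_subtype_top]
    have hspanB : Submodule.span ℂ (Set.range fun i => (bB i : Polynomial ℂ)) = B := by
      have h1 : Set.range (fun i => (bB i : Polynomial ℂ)) = B.subtype '' Set.range bB := by
        rw [← Set.range_comp]; rfl
      rw [h1, Submodule.span_image, bB.span_eq, Submodule.map_subtype_top]
    have hg_li : LinearIndependent ℂ
        (Sum.elim (fun i => (bA i : Polynomial ℂ)) (fun i => (bB i : Polynomial ℂ))) := by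
      refine hliA.sum_type hliB ?_
      rw [hspanA, hspanB]
      exact disjoint_iff.mpr hinf
    have hg_span : Submodule.span ℂ (Set.range
        (Sum.elim (fun i => (bA i : Polynomial ℂ)) (fun i => (bB i : Polynomial ℂ)))) = x := by
      rw [Set.Sum.elim_range, Submodule.span_union, hspanA, hspanB, hsup]
    set e : (Fin (Module.finrank ℂ A) ⊕ Fin (Module.finrank ℂ B)) ≃ Fin d :=
      finSumFinEquiv.trans (finCongr hrank) with he
    refine ⟨(Sum.elim (fun i => (bA i : Polynomial ℂ)) (fun i => (bB i : Polynomial ℂ))) ∘ e.symm,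
      hg_li.comp e.symm e.symm.injective, ?_, ?_⟩
    · rw [Function.Surjective.range_comp e.symm.surjective, hg_span]
    · intro i
      rcases hs : e.symm i with j | j
      · left
        have hmemA : (bA j : Polynomial ℂ) ∈ A := (bA j).2
        have := hAeig _ hmemA
        rw [hσdef, rotMap_neg_one] at this
        simpa [hs] using this
      · right
        have hmemB : (bB j : Polynomial ℂ) ∈ B := (bB j).2
        have := hBeig _ hmemB
        rw [hσdef, rotMap_neg_one] at this
        simpa [hs] using this

/-- Let `h` be a polynomial of degree at most `N = d(n-d)`,
either even or odd, with distinct roots.  Then the even-odd points in the fibre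
`X(h) = Wr⁻¹(h)` are exactly the points of `X(h)` fixed by the involution of
`X` induced by `diag(-1, 1) ∈ PGL₂(ℂ)` (the substitution `z ↦ -z`). -/
theorem statement10 (d n : ℕ) (hd : 0 < d) (hdn : d < n)
    (h : Polynomial ℂ) (hne : h ≠ 0) (hdeg : h.natDegree ≤ d * (n - d))
    (heo : h.comp (-Polynomial.X) = h ∨ h.comp (-Polynomial.X) = -h)
    (hsq : Squarefree h) :
    ∀ x : Submodule ℂ (Polynomial ℂ), IsGrPoint n d x → InFibre d x h →
      (IsEvenOddPoint d x ↔ Submodule.map (rotMap (-1)) x = x) := by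
  intro x hgr _
  exact statement10' d n x hgr
end

section
/- Let x ∈ X and let P_x = {λ ∈ Λ : p_λ(x) ≠ 0}. Then x is fixed by C_r if and only if all partitions in P_x have the same r-core. Moreover, for each r-core κ ∈ Λ there is a unique connected component X^{r,κ} of the C_r-fixed locus X^r, consisting of exactly those C_r-fixed points x for which every λ ∈ P_x satisfies core^r(λ) = κ. -/
open Polynomial

/-!
A partition `λ` in the `d × (n - d)` box is determined by its beta set `J(λ) ⊆ {0, …, n - 1}`,
and removing an `r`-ribbon from `λ` moves one element `c` of `J(λ)` to `c - r`. So two partitions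
have the same `r`-core iff their beta sets have equally many elements in each residue class
modulo `r` (the beads on the runners of the `r`-abacus); in particular `∑ J(λ) mod r` is an
invariant of the `r`-core.

The rotation `z ↦ ζ z` scales `z^k` by `ζ^k`. Bring a basis of `x` into reduced echelon form
with pivot columns `δ`; then `x` is `C_r`-fixed iff every basis vector `f_i` only involves
monomials `z^k` with `k ≡ δ_i (mod r)`. In that case a nonzero Plücker coordinate `p_λ(x)` has a
nonzero term in its Leibniz expansion, which matches `J(λ)` with the pivots residue by residue,
so all partitions in `P_x` have the runner counts of the pivots. Otherwise some `f_i` has a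
nonzero coefficient at `k ≢ δ_i`, and replacing the pivot `δ_i` by `k` gives a second nonzero
Plücker coordinate whose column set has a different sum modulo `r`. For an `r`-core `κ`, the span
of the monomials `z^j`, `j ∈ J(κ)`, is a fixed point with `p_κ ≠ 0`.
-/

open Finset

/-! ### Beta sets -/

theorem StrictMono.fin_add_le {d : ℕ} {δ : Fin d → ℕ} (hδ : StrictMono δ) {k l : Fin d}
    (hkl : k ≤ l) : δ k + (l - k : ℕ) ≤ δ l := by
  obtain ⟨t, ht⟩ : ∃ t, (l : ℕ) = k + t := ⟨l - k, by omega⟩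
  induction t generalizing l with
  | zero => obtain rfl : k = l := Fin.ext (by omega); simp
  | succ t ih =>
    have hl' : (k : ℕ) + t < d := by omega
    have := ih (l := ⟨k + t, hl'⟩) (Fin.mk_le_mk.mpr (by simp)) rfl
    have := hδ (show (⟨k + t, hl'⟩ : Fin d) < l from Fin.mk_lt_of_lt_val (by omega))
    simp only at *; omega

theorem exists_perm_comp_eq {ι α : Type*} {ε J : ι → α} (hε : Function.Injective ε)
    (hJ : Function.Injective J) (h : Set.range ε = Set.range J) :
    ∃ σ : Equiv.Perm ι, ε ∘ σ = J :=
  ⟨(Equiv.ofInjective J hJ).trans ((Equiv.setCongr h).symm.trans (Equiv.ofInjective ε hε).symm),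
    funext fun i => by simp [Equiv.apply_ofInjective_symm]⟩

namespace PartitionIn

variable {d w : ℕ}

theorem ext {lam mu : PartitionIn d w} (h : lam.part = mu.part) : lam = mu := by
  cases lam; cases mu; cases h; rfl

/-- The beta number of row `i`; read from row `d - 1` up to row `0` they are the columns `J(λ)`. -/
def beta (lam : PartitionIn d w) (i : ℕ) : ℕ := lam.part i + (d - 1 - i)

theorem beta_lt_beta (lam : PartitionIn d w) {i j : ℕ} (hij : i < j) (hj : j < d) :
    lam.beta j < lam.beta i := by
  have := lam.antitone hij.le
  simp only [beta]; omega

theorem beta_le_beta (lam : PartitionIn d w) {i j : ℕ} (hij : i ≤ j) (hj : j < d) :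
    lam.beta j ≤ lam.beta i := by
  rcases hij.eq_or_lt with rfl | h
  · exact le_rfl
  · exact (lam.beta_lt_beta h hj).le

theorem beta_lt (lam : PartitionIn d w) {i : ℕ} (hi : i < d) : lam.beta i < d + w := by
  have := lam.le_w i
  simp only [beta]; omega

theorem beta_injOn (lam : PartitionIn d w) {i j : ℕ} (hi : i < d) (hj : j < d)
    (h : lam.beta i = lam.beta j) : i = j := by
  rcases lt_trichotomy i j with hlt | rfl | hlt
  · exact absurd h (lam.beta_lt_beta hlt hj).ne'
  · rfl
  · exact absurd h (lam.beta_lt_beta hlt hi).ne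

theorem pluckerIndex_eq_beta (lam : PartitionIn d w) (k : Fin d) :
    pluckerIndex lam k = lam.beta (d - 1 - k) := by
  have := k.isLt
  simp only [pluckerIndex, beta, show d - 1 - (d - 1 - (k : ℕ)) = k by omega]
  omega

theorem pluckerIndex_strictMono (lam : PartitionIn d w) : StrictMono (pluckerIndex lam) := by
  intro i j hij
  rw [pluckerIndex_eq_beta, pluckerIndex_eq_beta]
  exact lam.beta_lt_beta (by omega) (by omega)

theorem pluckerIndex_lt (lam : PartitionIn d w) (k : Fin d) : pluckerIndex lam k < d + w := by
  rw [pluckerIndex_eq_beta]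
  exact lam.beta_lt (by omega)

theorem pluckerIndex_injective : Function.Injective (pluckerIndex (d := d) (w := w)) := by
  intro lam mu h
  apply PartitionIn.ext
  funext i
  by_cases hi : i < d
  · have := congrFun h ⟨d - 1 - i, by omega⟩
    simp only [pluckerIndex, show d - 1 - (d - 1 - i) = i by omega] at this
    omega
  · rw [lam.eq_zero i (by omega), mu.eq_zero i (by omega)]

def betaSet (lam : PartitionIn d w) : Finset ℕ := (range d).image lam.beta

theorem mem_betaSet {lam : PartitionIn d w} {c : ℕ} :
    c ∈ lam.betaSet ↔ ∃ i < d, lam.beta i = c := by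
  simp [betaSet]

theorem betaSet_eq_image_pluckerIndex (lam : PartitionIn d w) :
    lam.betaSet = univ.image (pluckerIndex lam) := by
  ext c
  simp only [mem_betaSet, mem_image, mem_univ, true_and, pluckerIndex_eq_beta]
  constructor
  · rintro ⟨i, hi, rfl⟩
    exact ⟨⟨d - 1 - i, by omega⟩, by simp only [show d - 1 - (d - 1 - i) = i by omega]⟩
  · rintro ⟨k, rfl⟩
    exact ⟨d - 1 - k, by omega, rfl⟩

theorem card_betaSet (lam : PartitionIn d w) : lam.betaSet.card = d := by
  rw [betaSet_eq_image_pluckerIndex,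
    card_image_of_injective _ lam.pluckerIndex_strictMono.injective, card_univ, Fintype.card_fin]

theorem pluckerIndex_eq_orderEmbOfFin {lam : PartitionIn d w} {s : Finset ℕ}
    (hs : lam.betaSet = s) (hcard : s.card = d) : pluckerIndex lam = s.orderEmbOfFin hcard :=
  orderEmbOfFin_unique hcard
    (fun k => hs ▸ lam.betaSet_eq_image_pluckerIndex ▸ mem_image_of_mem _ (mem_univ k))
    lam.pluckerIndex_strictMono

theorem betaSet_injective : Function.Injective (betaSet (d := d) (w := w)) := fun lam mu h =>
  pluckerIndex_injective <| by
    rw [pluckerIndex_eq_orderEmbOfFin h mu.card_betaSet, pluckerIndex_eq_orderEmbOfFin rfl]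

def ofBetaSet (s : Finset ℕ) (hcard : s.card = d) (hlt : ∀ c ∈ s, c < d + w) :
    PartitionIn d w where
  part i := if h : i < d then s.orderEmbOfFin hcard ⟨d - 1 - i, by omega⟩ - (d - 1 - i) else 0
  antitone i j hij := by
    by_cases hj : j < d
    · have := (s.orderEmbOfFin hcard).strictMono.fin_add_le
        (show (⟨d - 1 - j, by omega⟩ : Fin d) ≤ ⟨d - 1 - i, by omega⟩ from
          Fin.mk_le_mk.mpr (by omega))
      simp only [dif_pos hj, dif_pos (show i < d by omega)]
      simp only at this; omega
    · simp [dif_neg hj]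
  le_w i := by
    by_cases hi : i < d
    · have := (s.orderEmbOfFin hcard).strictMono.fin_add_le
        (show (⟨d - 1 - i, by omega⟩ : Fin d) ≤ ⟨d - 1, by omega⟩ from Fin.mk_le_mk.mpr (by omega))
      have := hlt _ (s.orderEmbOfFin_mem hcard ⟨d - 1, by omega⟩)
      simp only [dif_pos hi]
      simp only at *; omega
    · simp [dif_neg hi]
  eq_zero i hi := dif_neg (by omega)

theorem pluckerIndex_ofBetaSet (s : Finset ℕ) (hcard : s.card = d) (hlt : ∀ c ∈ s, c < d + w) :
    pluckerIndex (ofBetaSet s hcard hlt) = s.orderEmbOfFin hcard := by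
  funext k
  have hk := k.isLt
  have := (s.orderEmbOfFin hcard).strictMono.fin_add_le
    (show (⟨0, by omega⟩ : Fin d) ≤ k from Fin.mk_le_mk.mpr (Nat.zero_le _))
  simp only [pluckerIndex, ofBetaSet, dif_pos (show d - 1 - (k : ℕ) < d by omega),
    show d - 1 - (d - 1 - (k : ℕ)) = k by omega, Fin.eta]
  simp only at this
  omega

theorem betaSet_ofBetaSet (s : Finset ℕ) (hcard : s.card = d) (hlt : ∀ c ∈ s, c < d + w) :
    (ofBetaSet s hcard hlt).betaSet = s := by
  rw [betaSet_eq_image_pluckerIndex, pluckerIndex_ofBetaSet, image_orderEmbOfFin_univ]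

/-- The partition whose columns `J(λ)` are the values of `ε`, in some order. -/
def ofInjective (ε : Fin d → ℕ) (hε : Function.Injective ε) (hεw : ∀ i, ε i < d + w) :
    PartitionIn d w :=
  ofBetaSet (univ.image ε) (by rw [card_image_of_injective _ hε, card_univ, Fintype.card_fin])
    (by simpa using hεw)

theorem betaSet_ofInjective (ε : Fin d → ℕ) (hε : Function.Injective ε)
    (hεw : ∀ i, ε i < d + w) : (ofInjective ε hε hεw).betaSet = univ.image ε :=
  betaSet_ofBetaSet _ _ _

theorem exists_perm_comp_eq_pluckerIndex_ofInjective (ε : Fin d → ℕ)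
    (hε : Function.Injective ε) (hεw : ∀ i, ε i < d + w) :
    ∃ σ : Equiv.Perm (Fin d), ε ∘ σ = pluckerIndex (ofInjective ε hε hεw) := by
  rw [ofInjective, pluckerIndex_ofBetaSet]
  exact exists_perm_comp_eq hε (orderEmbOfFin _ _).injective
    (by rw [range_orderEmbOfFin, coe_image, coe_univ, Set.image_univ])

/-! ### Ribbons -/

variable {r : ℕ}

theorem sum_Icc_sub_add_beta {lam mu : PartitionIn d w} {a b : ℕ} (hab : a ≤ b) (hbd : b < d)
    (hmid : ∀ i, a ≤ i → i < b → mu.part i + 1 = lam.part (i + 1))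
    (hb : mu.part b < lam.part b) :
    ∑ i ∈ Icc a b, (lam.part i - mu.part i) + mu.beta b = lam.beta a := by
  induction hab using Nat.decreasingInduction with
  | self => simp only [Icc_self, sum_singleton, beta]; omega
  | of_succ a hab ih =>
    rw [← insert_Icc_add_one_left_eq_Icc hab.le, sum_insert (by simp)]
    have := ih (fun i h1 h2 => hmid i (by omega) h2)
    have := hmid a le_rfl hab
    have := lam.antitone (show a ≤ a + 1 by omega)
    simp only [beta] at *
    omega

theorem sum_range_eq_sum_Icc {lam mu : PartitionIn d w} {a b : ℕ} (hbd : b < d)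
    (hout : ∀ i, i < a ∨ b < i → mu.part i = lam.part i) :
    ∑ i ∈ range d, (lam.part i - mu.part i) = ∑ i ∈ Icc a b, (lam.part i - mu.part i) := by
  refine (sum_subset (fun i hi => ?_) fun i _ hi => ?_).symm
  · simp only [mem_Icc, mem_range] at hi ⊢; omega
  · have := hout i (by simp only [mem_Icc] at hi; omega)
    omega

theorem ncard_inShape (lam mu : PartitionIn d w) :
    {p : ℕ × ℕ | InShape lam mu p.1 p.2}.ncard = ∑ i ∈ range d, (lam.part i - mu.part i) := by
  have hset : {p : ℕ × ℕ | InShape lam mu p.1 p.2} =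
      ↑((range d).biUnion fun i => (Ico (mu.part i) (lam.part i)).image (i, ·)) := by
    ext ⟨i, j⟩
    simp only [InShape, Set.mem_ofPred_eq, coe_biUnion, coe_range, Set.mem_iUnion, coe_image,
      coe_Ico, Set.mem_image, Set.mem_Ico, Set.mem_Iio, Prod.mk.injEq]
    constructor
    · rintro ⟨hi, hj⟩
      exact ⟨i, hi, j, hj, rfl, rfl⟩
    · rintro ⟨i, hi, j, hj, rfl, rfl⟩
      exact ⟨hi, hj⟩
  rw [hset, Set.ncard_coe_finset, card_biUnion]
  · refine sum_congr rfl fun i _ => ?_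
    rw [card_image_of_injective _ (Prod.mk_right_injective i), Nat.card_Ico]
  · intro i _ i' _ hii'
    simp only [disjoint_left, mem_image]
    rintro _ ⟨_, _, rfl⟩ ⟨_, _, h⟩
    exact hii' (congrArg Prod.fst h).symm

/-- `μ` arises from `λ` by removing a ribbon of size `r` that occupies exactly the rows
`a, …, b`: in each of these rows but the last, the row of `μ` ends one box to the left of the
end of the next row of `λ`. -/
structure IsRibbonRows (r : ℕ) (lam mu : PartitionIn d w) (a b : ℕ) : Prop where
  le : a ≤ b
  lt : b < d
  part_eq : ∀ i, i < a ∨ b < i → mu.part i = lam.part i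
  part_add_one : ∀ i, a ≤ i → i < b → mu.part i + 1 = lam.part (i + 1)
  part_lt : mu.part b < lam.part b
  beta_eq : lam.beta a = mu.beta b + r

namespace IsRibbonRows

variable {lam mu : PartitionIn d w} {a b : ℕ}

theorem part_lt_of_le_of_le (h : IsRibbonRows r lam mu a b) {i : ℕ} (hai : a ≤ i) (hib : i ≤ b) :
    mu.part i < lam.part i := by
  rcases hib.lt_or_eq with hib | rfl
  · have := h.part_add_one i hai hib
    have := lam.antitone (show i ≤ i + 1 by omega)
    omega
  · exact h.part_lt

theorem subPartition (h : IsRibbonRows r lam mu a b) : SubPartition mu lam := by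
  intro i
  by_cases hi : i < a ∨ b < i
  · exact (h.part_eq i hi).le
  · exact (h.part_lt_of_le_of_le (by omega) (by omega)).le

theorem mem_rows (h : IsRibbonRows r lam mu a b) {i j : ℕ} (hij : InShape lam mu i j) :
    a ≤ i ∧ i ≤ b := by
  by_contra hcon
  have := h.part_eq i (by omega)
  obtain ⟨-, h1, h2⟩ := hij
  omega

theorem ncard (h : IsRibbonRows r lam mu a b) :
    {p : ℕ × ℕ | InShape lam mu p.1 p.2}.ncard = r := by
  rw [ncard_inShape, sum_range_eq_sum_Icc h.lt h.part_eq]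
  have := sum_Icc_sub_add_beta h.le h.lt h.part_add_one h.part_lt
  have := h.beta_eq
  omega

/-- Every box of the skew shape is joined to its bottom-left box `(b, μ_b)` by moving left
inside a row or down from the first box of a row. -/
theorem reflTransGen_bottomLeft (h : IsRibbonRows r lam mu a b) (m : ℕ) :
    ∀ p : ℕ × ℕ, InShape lam mu p.1 p.2 → p.2 + (b - p.1) ≤ m →
      Relation.ReflTransGen
        (fun u v => InShape lam mu u.1 u.2 ∧ InShape lam mu v.1 v.2 ∧ BoxAdj u v)
        p (b, mu.part b) := by
  induction m with
  | zero =>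
    rintro ⟨i, j⟩ hp hm
    have := h.mem_rows hp
    obtain ⟨-, h1, -⟩ := hp
    obtain rfl : i = b := by simp only at hm; omega
    obtain rfl : j = mu.part i := by simp only at hm h1; omega
    exact .refl
  | succ m ih =>
    rintro ⟨i, j⟩ hp hm
    have hrows := h.mem_rows hp
    obtain ⟨hid, h1, h2⟩ := hp
    simp only at h1 h2 hm
    have hp : InShape lam mu i j := ⟨hid, h1, h2⟩
    rcases h1.lt_or_eq with hgt | rfl
    · have hq : InShape lam mu i (j - 1) := ⟨hid, by omega, by omega⟩
      have hadj : BoxAdj (i, j) (i, j - 1) := Or.inl ⟨rfl, Or.inr (by simp only; omega)⟩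
      exact .head (b := (i, j - 1)) ⟨hp, hq, hadj⟩ (ih (i, j - 1) hq (by simp only; omega))
    · rcases hrows.2.lt_or_eq with hib | rfl
      · have := h.lt
        have := h.part_add_one i hrows.1 hib
        have := mu.antitone (show i ≤ i + 1 by omega)
        have hq : InShape lam mu (i + 1) (mu.part i) := ⟨by omega, by omega, by omega⟩
        have hadj : BoxAdj (i, mu.part i) (i + 1, mu.part i) := Or.inr ⟨rfl, Or.inl rfl⟩
        exact .head (b := (i + 1, mu.part i)) ⟨hp, hq, hadj⟩
          (ih (i + 1, mu.part i) hq (by simp only; omega))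
      · exact .refl

theorem ribbonStep (h : IsRibbonRows r lam mu a b) : RibbonStep r lam mu := by
  refine ⟨h.subPartition, h.ncard, fun p hp q hq => ?_, ?_⟩
  · have : Std.Symm fun u v : ℕ × ℕ =>
        InShape lam mu u.1 u.2 ∧ InShape lam mu v.1 v.2 ∧ BoxAdj u v :=
      ⟨fun u v ⟨hu, hv, huv⟩ => ⟨hv, hu, by unfold BoxAdj at *; tauto⟩⟩
    exact (h.reflTransGen_bottomLeft _ p hp le_rfl).trans
      (Std.Symm.symm _ _ (h.reflTransGen_bottomLeft _ q hq le_rfl))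
  · rintro ⟨i, j, h1, h2, -, h4⟩
    have hib : i < b := by have := h.mem_rows h2; omega
    have := h.part_add_one i (h.mem_rows h1).1 hib
    obtain ⟨-, -, h2'⟩ := h2
    obtain ⟨-, h1', -⟩ := h1
    obtain ⟨-, -, h4'⟩ := h4
    simp only at *
    omega

theorem beta_sub_notMem_betaSet (h : IsRibbonRows r lam mu a b) :
    lam.beta a - r ∉ lam.betaSet := by
  have hcr : lam.beta a - r = mu.beta b := by have := h.beta_eq; omega
  have hb := h.part_lt
  have hbd := h.lt
  rw [hcr, mem_betaSet]
  rintro ⟨i, hid, hi⟩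
  rcases le_or_gt i b with hib | hib
  · have := lam.beta_le_beta hib hbd
    simp only [beta] at *
    omega
  · have := lam.beta_le_beta (show b + 1 ≤ i by omega) hid
    have := h.part_eq (b + 1) (by omega)
    have := mu.antitone (show b ≤ b + 1 by omega)
    simp only [beta] at *
    omega

theorem betaSet_eq (h : IsRibbonRows r lam mu a b) :
    mu.betaSet = insert (lam.beta a - r) (lam.betaSet.erase (lam.beta a)) := by
  have had : a < d := h.le.trans_lt h.lt
  have hmem : lam.beta a ∈ lam.betaSet := mem_betaSet.mpr ⟨a, had, rfl⟩
  refine eq_of_subset_of_card_le (fun c hc => ?_) ?_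
  · obtain ⟨i, hid, rfl⟩ := mem_betaSet.mp hc
    rw [mem_insert, mem_erase]
    by_cases hib : i = b
    · subst hib
      have := h.beta_eq
      left; omega
    right
    obtain ⟨i', hi'd, hi'a, hi'⟩ : ∃ i' < d, i' ≠ a ∧ mu.beta i = lam.beta i' := by
      by_cases hmid : a ≤ i ∧ i < b
      · have := h.part_add_one i hmid.1 hmid.2
        have := h.lt
        exact ⟨i + 1, by omega, by omega, by simp only [beta]; omega⟩
      · have := h.part_eq i (by omega)
        exact ⟨i, hid, by rintro rfl; have := h.le; omega, by
          simp only [beta]; omega⟩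
    rw [hi']
    exact ⟨fun he => hi'a (lam.beta_injOn hi'd had he), mem_betaSet.mpr ⟨i', hi'd, rfl⟩⟩
  · rw [card_insert_of_notMem (fun h' => h.beta_sub_notMem_betaSet (mem_of_mem_erase h')),
      card_erase_of_mem hmem, card_betaSet, card_betaSet]
    omega

end IsRibbonRows

theorem exists_last_row_beta_gt {lam : PartitionIn d w} {a e : ℕ} (ha : a < d)
    (he : e < lam.beta a) (hnot : e ∉ lam.betaSet) :
    ∃ b, a ≤ b ∧ b < d ∧ e < lam.beta b ∧ (b + 1 < d → lam.beta (b + 1) < e) ∧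
      d - 1 - b ≤ e := by
  classical
  obtain ⟨b, hbdef⟩ : ∃ b, Nat.findGreatest (fun i => e < lam.beta i) (d - 1) = b := ⟨_, rfl⟩
  have hb : e < lam.beta b := hbdef ▸ Nat.findGreatest_spec (P := fun i => e < lam.beta i)
    (show a ≤ d - 1 by omega) he
  have hnext : b + 1 < d → lam.beta (b + 1) < e := fun hb1 => by
    have h1 : ¬ e < lam.beta (b + 1) :=
      Nat.findGreatest_is_greatest (P := fun i => e < lam.beta i)
        (show Nat.findGreatest (fun i => e < lam.beta i) (d - 1) < b + 1 by omega)
        (show b + 1 ≤ d - 1 by omega)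
    have h2 : lam.beta (b + 1) ≠ e := fun heq => hnot (mem_betaSet.mpr ⟨b + 1, hb1, heq⟩)
    omega
  have hbd : b ≤ d - 1 := hbdef ▸ Nat.findGreatest_le (d - 1)
  refine ⟨b, hbdef ▸ Nat.le_findGreatest (by omega) he, by omega, hb, hnext, ?_⟩
  by_cases hb1 : b + 1 < d
  · have := hnext hb1
    simp only [beta] at this
    omega
  · omega

/-- The parts of `λ` after removing the ribbon with rows `a, …, b` whose last row ends in the
column with beta number `e`. -/
def removeRibbonPart (lam : PartitionIn d w) (a b e i : ℕ) : ℕ :=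
  if i < a ∨ b < i then lam.part i else if i < b then lam.part (i + 1) - 1 else e - (d - 1 - b)

section RemoveRibbon

variable {lam : PartitionIn d w} {a b e : ℕ}

theorem removeRibbonPart_of_lt_or_lt {i : ℕ} (hi : i < a ∨ b < i) :
    lam.removeRibbonPart a b e i = lam.part i :=
  if_pos hi

theorem removeRibbonPart_of_le_of_lt {i : ℕ} (h1 : a ≤ i) (h2 : i < b) :
    lam.removeRibbonPart a b e i = lam.part (i + 1) - 1 := by
  rw [removeRibbonPart, if_neg (by omega), if_pos h2]

theorem removeRibbonPart_self (hab : a ≤ b) : lam.removeRibbonPart a b e b = e - (d - 1 - b) := by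
  rw [removeRibbonPart, if_neg (by omega), if_neg (lt_irrefl b)]

theorem removeRibbonPart_le (hab : a ≤ b) (he : e < lam.beta b) (i : ℕ) :
    lam.removeRibbonPart a b e i ≤ lam.part i := by
  by_cases hi : i < a ∨ b < i
  · rw [removeRibbonPart_of_lt_or_lt hi]
  rcases lt_or_ge i b with h2 | h2
  · rw [removeRibbonPart_of_le_of_lt (by omega) h2]
    have := lam.antitone (show i ≤ i + 1 by omega)
    omega
  · rw [show i = b by omega, removeRibbonPart_self hab]
    simp only [beta] at he
    omega

theorem removeRibbonPart_succ_le (hab : a ≤ b) (he : e < lam.beta b)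
    (hnext : b + 1 < d → lam.beta (b + 1) < e) (i : ℕ) :
    lam.removeRibbonPart a b e (i + 1) ≤ lam.removeRibbonPart a b e i := by
  have hmono : ∀ i, lam.part (i + 1) ≤ lam.part i := fun i => lam.antitone (show i ≤ i + 1 by omega)
  have hle := removeRibbonPart_le (e := e) hab he (i + 1)
  rcases lt_or_ge i a with h1 | h1
  · rw [removeRibbonPart_of_lt_or_lt (Or.inl h1)]
    exact hle.trans (hmono i)
  rcases lt_or_ge i b with h2 | h2
  · rw [removeRibbonPart_of_le_of_lt h1 h2]
    rcases lt_or_eq_of_le (show i + 1 ≤ b by omega) with h3 | h3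
    · rw [removeRibbonPart_of_le_of_lt (by omega) h3]
      have := hmono (i + 1)
      omega
    · rw [h3, removeRibbonPart_self hab]
      simp only [beta] at he
      omega
  rw [removeRibbonPart_of_lt_or_lt (Or.inr (show b < i + 1 by omega))]
  rcases h2.eq_or_lt with h2 | h2
  · rw [← h2, removeRibbonPart_self hab]
    by_cases hb1 : b + 1 < d
    · have := hnext hb1
      simp only [beta] at this he
      omega
    · rw [lam.eq_zero _ (by omega)]
      exact Nat.zero_le _
  · rw [removeRibbonPart_of_lt_or_lt (Or.inr h2)]
    exact hmono i

theorem exists_isRibbonRows (hab : a ≤ b) (hbd : b < d) (he : e < lam.beta b)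
    (hnext : b + 1 < d → lam.beta (b + 1) < e) (hlow : d - 1 - b ≤ e) :
    ∃ mu, IsRibbonRows (lam.beta a - e) lam mu a b := by
  refine ⟨⟨lam.removeRibbonPart a b e,
      antitone_nat_of_succ_le (removeRibbonPart_succ_le hab he hnext),
      fun i => (removeRibbonPart_le hab he i).trans (lam.le_w i),
      fun i hi => by rw [removeRibbonPart_of_lt_or_lt (by omega), lam.eq_zero i hi]⟩,
    hab, hbd, fun i hi => removeRibbonPart_of_lt_or_lt hi, fun i h1 h2 => ?_, ?_, ?_⟩
  · show lam.removeRibbonPart a b e i + 1 = _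
    rw [removeRibbonPart_of_le_of_lt h1 h2]
    have := lam.antitone (show i + 1 ≤ b by omega)
    have := removeRibbonPart_le (e := e) hab he b
    rw [removeRibbonPart_self hab] at this
    simp only [beta] at he
    omega
  · show lam.removeRibbonPart a b e b < _
    rw [removeRibbonPart_self hab]
    simp only [beta] at he
    omega
  · have := lam.beta_le_beta hab hbd
    show lam.beta a = lam.removeRibbonPart a b e b + (d - 1 - b) + (lam.beta a - e)
    rw [removeRibbonPart_self hab]
    omega

end RemoveRibbon

theorem exists_ribbonStep_of_mem_betaSet {lam : PartitionIn d w} {c : ℕ} (hc : c ∈ lam.betaSet)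
    (hcr : r ≤ c) (hnot : c - r ∉ lam.betaSet) : ∃ mu, RibbonStep r lam mu := by
  obtain ⟨a, ha, rfl⟩ := mem_betaSet.mp hc
  have hr : 0 < r := Nat.pos_of_ne_zero fun h => hnot (by rwa [h, Nat.sub_zero])
  obtain ⟨b, hab, hbd, he, hnext, hlow⟩ := exists_last_row_beta_gt ha (by omega) hnot
  obtain ⟨mu, hmu⟩ := exists_isRibbonRows hab hbd he hnext hlow
  exact ⟨mu, (Nat.sub_sub_self hcr ▸ hmu).ribbonStep⟩

end PartitionIn

section BoxPaths

variable {S : Set (ℕ × ℕ)} {p q : ℕ × ℕ}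

theorem exists_mem_row_of_reflTransGen
    (h : Relation.ReflTransGen (fun u v => u ∈ S ∧ v ∈ S ∧ BoxAdj u v) p q) (hp : p ∈ S) :
    ∀ i, p.1 ≤ i → i ≤ q.1 → ∃ j, (i, j) ∈ S := by
  induction h with
  | refl =>
    intro i h1 h2
    obtain rfl : i = p.1 := le_antisymm h2 h1
    exact ⟨p.2, hp⟩
  | @tail q' q'' _ hstep ih =>
    intro i h1 h2
    obtain ⟨-, hq'', hadj⟩ := hstep
    rcases le_or_gt i q'.1 with hle | hgt
    · exact ih i h1 hle
    · obtain rfl : i = q''.1 := by rcases hadj with ⟨hrow, -⟩ | ⟨-, hc | hc⟩ <;> omega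
      exact ⟨q''.2, hq''⟩

theorem exists_vertical_pair_of_reflTransGen
    (h : Relation.ReflTransGen (fun u v => u ∈ S ∧ v ∈ S ∧ BoxAdj u v) p q) :
    ∀ i, p.1 ≤ i → i < q.1 → ∃ j, (i, j) ∈ S ∧ (i + 1, j) ∈ S := by
  induction h with
  | refl => intro i h1 h2; omega
  | @tail q' q'' _ hstep ih =>
    intro i h1 h2
    obtain ⟨hq', hq'', hadj⟩ := hstep
    rcases lt_or_ge i q'.1 with hlt | hge
    · exact ih i h1 hlt
    · rcases hadj with ⟨hrow, -⟩ | ⟨hcol, hc | hc⟩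
      · omega
      · obtain rfl : i = q'.1 := by omega
        refine ⟨q'.2, hq', ?_⟩
        rwa [show (q'.1 + 1, q'.2) = q'' from Prod.ext hc hcol]
      · omega

end BoxPaths

namespace RibbonStep

open PartitionIn

variable {d w r : ℕ} {lam mu : PartitionIn d w}

theorem part_lt_of_le_of_le (h : RibbonStep r lam mu) {a b i : ℕ} (hbd : b < d)
    (ha : mu.part a < lam.part a) (hb : mu.part b < lam.part b) (hai : a ≤ i) (hib : i ≤ b) :
    mu.part i < lam.part i := by
  have hbox : ∀ k, k < d → mu.part k < lam.part k →
      ((k, mu.part k) : ℕ × ℕ) ∈ {p : ℕ × ℕ | InShape lam mu p.1 p.2} :=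
    fun k hk hk' => ⟨hk, le_rfl, hk'⟩
  obtain ⟨j, -, hj, hj'⟩ := exists_mem_row_of_reflTransGen
    (h.2.2.1 _ (hbox a (by omega) ha) _ (hbox b hbd hb)) (hbox a (by omega) ha) i hai hib
  simp only at hj hj'
  omega

theorem part_add_one_eq (h : RibbonStep r lam mu) {i : ℕ} (hi : i + 1 < d)
    (h1 : mu.part i < lam.part i) (h2 : mu.part (i + 1) < lam.part (i + 1)) :
    mu.part i + 1 = lam.part (i + 1) := by
  obtain ⟨-, -, hconn, hsquare⟩ := h
  have hmono := lam.antitone (show i ≤ i + 1 by omega)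
  have hmono' := mu.antitone (show i ≤ i + 1 by omega)
  have hcross : mu.part i < lam.part (i + 1) := by
    have hbox1 : ((i, mu.part i) : ℕ × ℕ) ∈ {p : ℕ × ℕ | InShape lam mu p.1 p.2} :=
      ⟨by omega, le_rfl, h1⟩
    have hbox2 : ((i + 1, mu.part (i + 1)) : ℕ × ℕ) ∈ {p : ℕ × ℕ | InShape lam mu p.1 p.2} :=
      ⟨hi, le_rfl, h2⟩
    obtain ⟨j, ⟨-, hj1, -⟩, ⟨-, -, hj2⟩⟩ :=
      exists_vertical_pair_of_reflTransGen (hconn _ hbox1 _ hbox2) i le_rfl (by simp)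
    simp only at hj1 hj2
    omega
  by_contra hne
  refine hsquare ⟨i, mu.part i, ?_, ?_, ?_, ?_⟩ <;>
    exact ⟨by dsimp only; omega, by dsimp only; omega, by dsimp only; omega⟩

theorem exists_isRibbonRows (hr : 1 ≤ r) (h : RibbonStep r lam mu) :
    ∃ a b, IsRibbonRows r lam mu a b := by
  classical
  have hrow_lt : ∀ i, mu.part i < lam.part i → i < d := fun i hi => by
    by_contra
    rw [lam.eq_zero i (by omega), mu.eq_zero i (by omega)] at hi
    omega
  obtain ⟨⟨i₀, j₀⟩, hi₀, hj₀, hj₀'⟩ : {p : ℕ × ℕ | InShape lam mu p.1 p.2}.Nonempty :=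
    Set.nonempty_of_ncard_ne_zero (by rw [h.2.1]; omega)
  have hi₀' : mu.part i₀ < lam.part i₀ := by simp only at hj₀ hj₀'; omega
  have hex : ∃ i, mu.part i < lam.part i := ⟨i₀, hi₀'⟩
  set a := Nat.find hex
  set b := Nat.findGreatest (fun i => mu.part i < lam.part i) d
  have ha : mu.part a < lam.part a := Nat.find_spec hex
  have hi₀b : i₀ ≤ b := Nat.le_findGreatest hi₀.le hi₀'
  have hb : mu.part b < lam.part b :=
    Nat.findGreatest_spec (P := fun i => mu.part i < lam.part i) hi₀.le
      hi₀'
  have hab : a ≤ b := (Nat.find_min' hex hi₀').trans hi₀b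
  have hbd : b < d := hrow_lt b hb
  have hout : ∀ i, i < a ∨ b < i → mu.part i = lam.part i := by
    intro i hi
    have := h.1 i
    rcases hi with hi | hi
    · have := Nat.find_min hex hi
      omega
    · by_cases hid : i ≤ d
      · have := Nat.findGreatest_is_greatest (P := fun i => mu.part i < lam.part i) hi hid
        omega
      · rw [lam.eq_zero i (by omega), mu.eq_zero i (by omega)]
  have hmid : ∀ i, a ≤ i → i < b → mu.part i + 1 = lam.part (i + 1) := fun i hai hib =>
    h.part_add_one_eq (by omega) (h.part_lt_of_le_of_le hbd ha hb hai hib.le)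
      (h.part_lt_of_le_of_le hbd ha hb (by omega) hib)
  refine ⟨a, b, hab, hbd, hout, hmid, hb, ?_⟩
  have := sum_Icc_sub_add_beta hab hbd hmid hb
  have := h.2.1
  rw [ncard_inShape, sum_range_eq_sum_Icc hbd hout] at this
  omega

theorem exists_betaSet_eq (hr : 1 ≤ r) (h : RibbonStep r lam mu) :
    ∃ c ∈ lam.betaSet, r ≤ c ∧ c - r ∉ lam.betaSet ∧
      mu.betaSet = insert (c - r) (lam.betaSet.erase c) := by
  obtain ⟨a, b, hrows⟩ := h.exists_isRibbonRows hr
  have := hrows.beta_eq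
  exact ⟨lam.beta a, mem_betaSet.mpr ⟨a, hrows.le.trans_lt hrows.lt, rfl⟩, by omega,
    hrows.beta_sub_notMem_betaSet, hrows.betaSet_eq⟩

end RibbonStep

/-! ### The `r`-abacus and `r`-cores -/

/-- The number of beads on runner `t` of the `r`-abacus whose beads sit at the positions `B`. -/
def runnerCount (r : ℕ) (B : Finset ℕ) (t : ℕ) : ℕ := #{c ∈ B | c % r = t}

theorem runnerCount_insert_sub_erase {r c : ℕ} {B : Finset ℕ} (hc : c ∈ B) (hcr : r ≤ c)
    (hnot : c - r ∉ B) (t : ℕ) :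
    runnerCount r (insert (c - r) (B.erase c)) t = runnerCount r B t := by
  have hmod : (c - r) % r = c % r := (Nat.mod_eq_sub_mod hcr).symm
  simp only [runnerCount, filter_insert, filter_erase, hmod]
  split_ifs with ht
  · have hcf : c ∈ B.filter (· % r = t) := mem_filter.mpr ⟨hc, ht⟩
    rw [card_insert_of_notMem fun h => hnot (mem_filter.mp (mem_of_mem_erase h)).1,
      card_erase_add_one hcf]
  · rw [erase_eq_of_notMem (show c ∉ B.filter (· % r = t) from
      fun h => ht (mem_filter.mp h).2)]

/-- The beads are pushed up as far as possible on every runner. -/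
def IsFlush (r : ℕ) (B : Finset ℕ) : Prop := ∀ c ∈ B, r ≤ c → c - r ∈ B

theorem IsFlush.sub_mul_mem {r : ℕ} {B : Finset ℕ} (hB : IsFlush r B) {c : ℕ} (hc : c ∈ B) :
    ∀ i, i * r ≤ c → c - i * r ∈ B
  | 0, _ => by simpa using hc
  | i + 1, h => by
    have := hB _ (hB.sub_mul_mem hc i (by nlinarith)) (by rw [add_mul] at h; omega)
    rwa [Nat.sub_sub, ← Nat.succ_mul] at this

theorem IsFlush.mem_iff {r : ℕ} {B : Finset ℕ} (hB : IsFlush r B) {t : ℕ} (ht : t < r) (j : ℕ) :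
    t + j * r ∈ B ↔ j < runnerCount r B t := by
  have hmod : ∀ i, (t + i * r) % r = t := fun i => by
    rw [Nat.add_mul_mod_self_right, Nat.mod_eq_of_lt ht]
  have hinj : Function.Injective fun i => t + i * r := by
    intro i i' h
    simp only at h
    exact Nat.eq_of_mul_eq_mul_right (show 0 < r by omega) (by omega)
  constructor
  · intro hj
    calc j < #(range (j + 1)) := by simp
      _ = #((range (j + 1)).image fun i => t + i * r) := (card_image_of_injective _ hinj).symm
      _ ≤ runnerCount r B t := card_le_card fun c hc => by
        obtain ⟨i, hi, rfl⟩ := mem_image.mp hc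
        have := hB.sub_mul_mem hj (j - i) (by rw [Nat.sub_mul]; omega)
        rw [show t + j * r - (j - i) * r = t + i * r by
          rw [Nat.sub_mul]; have := Nat.mul_le_mul_right r (Nat.lt_succ_iff.mp (mem_range.mp hi))
          omega] at this
        exact mem_filter.mpr ⟨this, hmod i⟩
  · intro hj
    by_contra hnot
    have hsub : {c ∈ B | c % r = t} ⊆ (range j).image fun i => t + i * r := by
      intro c hc
      obtain ⟨hcB, hct⟩ := mem_filter.mp hc
      have hc_eq : t + c / r * r = c := by rw [← hct]; exact Nat.mod_add_div' c r
      refine mem_image.mpr ⟨c / r, mem_range.mpr (lt_of_not_ge fun hle => hnot ?_), hc_eq⟩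
      have := hB.sub_mul_mem hcB (c / r - j) (by rw [Nat.sub_mul]; omega)
      rwa [show c - (c / r - j) * r = t + j * r by
        rw [Nat.sub_mul]; have := Nat.mul_le_mul_right r hle; omega] at this
    have := card_le_card hsub
    rw [card_image_of_injective _ hinj, card_range] at this
    exact absurd hj (not_lt.mpr this)

theorem IsFlush.eq_of_runnerCount_eq {r : ℕ} (hr : 1 ≤ r) {B B' : Finset ℕ} (hB : IsFlush r B)
    (hB' : IsFlush r B') (h : ∀ t, runnerCount r B t = runnerCount r B' t) : B = B' := by
  ext c
  have ht : c % r < r := Nat.mod_lt c (by omega)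
  rw [← Nat.mod_add_div' c r, hB.mem_iff ht, hB'.mem_iff ht, h]

namespace RibbonStep

variable {d w r : ℕ} {lam mu : PartitionIn d w}

theorem runnerCount_betaSet (hr : 1 ≤ r) (h : RibbonStep r lam mu) (t : ℕ) :
    runnerCount r mu.betaSet t = runnerCount r lam.betaSet t := by
  obtain ⟨c, hc, hcr, hnot, hset⟩ := h.exists_betaSet_eq hr
  rw [hset, runnerCount_insert_sub_erase hc hcr hnot]

theorem sum_betaSet_add (hr : 1 ≤ r) (h : RibbonStep r lam mu) :
    ∑ c ∈ mu.betaSet, c + r = ∑ c ∈ lam.betaSet, c := by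
  obtain ⟨c, hc, hcr, hnot, hset⟩ := h.exists_betaSet_eq hr
  rw [hset, sum_insert fun h => hnot (mem_of_mem_erase h), ← add_sum_erase _ _ hc]
  omega

end RibbonStep

namespace RibbonEquiv

variable {d w r : ℕ} {lam mu : PartitionIn d w}

theorem runnerCount_betaSet (hr : 1 ≤ r) (h : RibbonEquiv r lam mu) (t : ℕ) :
    runnerCount r lam.betaSet t = runnerCount r mu.betaSet t := by
  induction h with
  | rel _ _ h => exact (h.runnerCount_betaSet hr t).symm
  | refl => rfl
  | symm _ _ _ ih => exact ih.symm
  | trans _ _ _ _ _ ih₁ ih₂ => exact ih₁.trans ih₂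

theorem sum_betaSet_mod (hr : 1 ≤ r) (h : RibbonEquiv r lam mu) :
    (∑ c ∈ lam.betaSet, c) % r = (∑ c ∈ mu.betaSet, c) % r := by
  induction h with
  | rel _ _ h => rw [← h.sum_betaSet_add hr, Nat.add_mod_right]
  | refl => rfl
  | symm _ _ _ ih => exact ih.symm
  | trans _ _ _ _ _ ih₁ ih₂ => exact ih₁.trans ih₂

end RibbonEquiv

namespace PartitionIn

variable {d w r : ℕ}

theorem isRCore_iff_isFlush (kappa : PartitionIn d w) (hr : 1 ≤ r) :
    IsRCore r kappa ↔ IsFlush r kappa.betaSet := by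
  constructor
  · intro hcore c hc hcr
    by_contra hnot
    exact hcore (exists_ribbonStep_of_mem_betaSet hc hcr hnot)
  · rintro hflush ⟨mu, hstep⟩
    obtain ⟨c, hc, hcr, hnot, -⟩ := hstep.exists_betaSet_eq hr
    exact hnot (hflush c hc hcr)

theorem exists_reflTransGen_isFlush (hr : 1 ≤ r) (lam : PartitionIn d w) :
    ∃ nu, Relation.ReflTransGen (RibbonStep r) lam nu ∧ IsFlush r nu.betaSet := by
  induction hs : ∑ c ∈ lam.betaSet, c using Nat.strong_induction_on generalizing lam with
  | _ s ih =>
    by_cases hflush : IsFlush r lam.betaSet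
    · exact ⟨lam, .refl, hflush⟩
    obtain ⟨c, hc, hcr, hnot⟩ : ∃ c ∈ lam.betaSet, r ≤ c ∧ c - r ∉ lam.betaSet := by
      simpa [IsFlush] using hflush
    obtain ⟨mu, hmu⟩ := exists_ribbonStep_of_mem_betaSet hc hcr hnot
    obtain ⟨nu, hnu, hflush⟩ := ih _ (by have := hmu.sum_betaSet_add hr; omega) mu rfl
    exact ⟨nu, .head hmu hnu, hflush⟩

theorem exists_isRCore_ribbonEquiv (hr : 1 ≤ r) (lam : PartitionIn d w) :
    ∃ kappa, IsRCore r kappa ∧ RibbonEquiv r lam kappa := by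
  obtain ⟨nu, hnu, hflush⟩ := exists_reflTransGen_isFlush hr lam
  exact ⟨nu, (nu.isRCore_iff_isFlush hr).mpr hflush,
    Relation.EqvGen.reflTransGen_le_eqvGen _ _ _ hnu⟩

theorem ribbonEquiv_iff_runnerCount_eq (hr : 1 ≤ r) (lam mu : PartitionIn d w) :
    RibbonEquiv r lam mu ↔ ∀ t, runnerCount r lam.betaSet t = runnerCount r mu.betaSet t := by
  refine ⟨fun h => h.runnerCount_betaSet hr, fun hcount => ?_⟩
  obtain ⟨nu, hnu, hflush⟩ := exists_reflTransGen_isFlush hr lam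
  obtain ⟨nu', hnu', hflush'⟩ := exists_reflTransGen_isFlush hr mu
  have hequiv : RibbonEquiv r lam nu := Relation.EqvGen.reflTransGen_le_eqvGen _ _ _ hnu
  have hequiv' : RibbonEquiv r mu nu' := Relation.EqvGen.reflTransGen_le_eqvGen _ _ _ hnu'
  obtain rfl : nu = nu' := betaSet_injective <| hflush.eq_of_runnerCount_eq hr hflush' fun t => by
    rw [← hequiv.runnerCount_betaSet hr, hcount, hequiv'.runnerCount_betaSet hr]
  exact .trans _ _ _ hequiv (.symm _ _ hequiv')

theorem IsRCore.eq_of_ribbonEquiv (hr : 1 ≤ r) {kappa kappa' : PartitionIn d w}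
    (h : IsRCore r kappa) (h' : IsRCore r kappa') (he : RibbonEquiv r kappa kappa') :
    kappa = kappa' :=
  betaSet_injective <| ((kappa.isRCore_iff_isFlush hr).mp h).eq_of_runnerCount_eq hr
    ((kappa'.isRCore_iff_isFlush hr).mp h') (he.runnerCount_betaSet hr)

end PartitionIn

/-! ### Rotations and pivot bases -/

theorem coeff_rotMap (c : ℂ) (p : ℂ[X]) (k : ℕ) : (rotMap c p).coeff k = c ^ k * p.coeff k := by
  rw [rotMap, AlgHom.toLinearMap_apply, ← comp_eq_aeval, comp_C_mul_X_coeff, mul_comm]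

theorem rotMap_eq_pow_smul {u : ℂ} {r m : ℕ} (hu : u ^ r = 1) {p : ℂ[X]}
    (hp : ∀ k, p.coeff k ≠ 0 → k % r = m % r) : rotMap u p = u ^ m • p := by
  ext k
  rw [coeff_rotMap, coeff_smul, smul_eq_mul]
  by_cases hk : p.coeff k = 0
  · simp [hk]
  · rw [pow_eq_pow_mod k hu, pow_eq_pow_mod m hu, hp k hk]

theorem span_range_smul_eq {K M ι : Type*} [Field K] [AddCommGroup M] [Module K M] (f : ι → M)
    {a : ι → K} (ha : ∀ i, a i ≠ 0) :
    Submodule.span K (Set.range fun i => a i • f i) = Submodule.span K (Set.range f) := by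
  refine le_antisymm (Submodule.span_le.mpr ?_) (Submodule.span_le.mpr ?_) <;>
    rintro _ ⟨i, rfl⟩
  · exact Submodule.smul_mem _ _ (Submodule.subset_span ⟨i, rfl⟩)
  · rw [← inv_smul_smul₀ (ha i) (f i)]
    exact Submodule.smul_mem _ _ (Submodule.subset_span ⟨i, rfl⟩)

noncomputable def crRoot (r : ℕ) : ℂ := Complex.exp (-(2 * Real.pi * Complex.I) / r)

theorem isPrimitiveRoot_crRoot {r : ℕ} (hr : 1 ≤ r) : IsPrimitiveRoot (crRoot r) r := by
  rw [crRoot, neg_div, Complex.exp_neg]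
  exact (Complex.isPrimitiveRoot_exp r (by omega)).inv

theorem crFixed_iff_map_eq {r : ℕ} (x : Submodule ℂ ℂ[X]) :
    CrFixed r x ↔ ∀ j < r, x.map (rotMap (crRoot r ^ j)) = x := by
  have hexp (j : ℕ) : Complex.exp (-(2 * Real.pi * Complex.I * j) / r) = crRoot r ^ j := by
    rw [crRoot, ← Complex.exp_nat_mul]
    ring_nf
  exact ⟨fun h j hj => hexp j ▸ h ⟨j, hj⟩, fun h j => (hexp j).symm ▸ h j j.isLt⟩

theorem crFixed_span_of_coeff {r : ℕ} (hr : 1 ≤ r) {ι : Type*} (f : ι → ℂ[X]) (m : ι → ℕ)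
    (hf : ∀ i k, (f i).coeff k ≠ 0 → k % r = m i % r) :
    CrFixed r (Submodule.span ℂ (Set.range f)) := by
  refine (crFixed_iff_map_eq _).mpr fun j _ => ?_
  have hu : (crRoot r ^ j) ^ r = 1 := by
    rw [pow_right_comm, (isPrimitiveRoot_crRoot hr).pow_eq_one, one_pow]
  rw [Submodule.map_span, ← Set.range_comp]
  simp only [Function.comp_def, rotMap_eq_pow_smul hu (hf _)]
  exact span_range_smul_eq f fun i => pow_ne_zero _ (pow_ne_zero _ (Complex.exp_ne_zero _))

/-- Character orthogonality for the group of `r`-th roots of unity. -/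
theorem sum_crRoot_pow_mul_inv {r : ℕ} (hr : 1 ≤ r) (k m : ℕ) :
    ∑ j ∈ range r, (crRoot r ^ j) ^ k * ((crRoot r ^ j) ^ m)⁻¹ =
      if k % r = m % r then (r : ℂ) else 0 := by
  have hζ := isPrimitiveRoot_crRoot hr
  have hne : crRoot r ^ m ≠ 0 := pow_ne_zero _ (Complex.exp_ne_zero _)
  set u := crRoot r ^ k * (crRoot r ^ m)⁻¹
  have hterm : ∀ j, (crRoot r ^ j) ^ k * ((crRoot r ^ j) ^ m)⁻¹ = u ^ j := fun j => by
    rw [mul_pow, inv_pow, ← pow_mul, ← pow_mul, ← pow_mul, ← pow_mul, mul_comm j k, mul_comm j m]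
  simp only [hterm]
  split_ifs with h
  · have hu : u = 1 := by
      rw [← mul_inv_cancel₀ hne]
      show crRoot r ^ k * _ = _
      rw [pow_eq_pow_mod k hζ.pow_eq_one, h, ← pow_eq_pow_mod m hζ.pow_eq_one]
    simp [hu]
  · have hu : u ≠ 1 := fun hu => h <| by
      have : crRoot r ^ k = crRoot r ^ m := by rw [← mul_inv_eq_one₀ hne]; exact hu
      rw [pow_eq_pow_mod k hζ.pow_eq_one, pow_eq_pow_mod m hζ.pow_eq_one] at this
      exact hζ.pow_inj (Nat.mod_lt _ (by omega)) (Nat.mod_lt _ (by omega)) this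
    have hur : u ^ r = 1 := by
      rw [mul_pow, inv_pow, pow_right_comm, pow_right_comm _ m, hζ.pow_eq_one, one_pow, one_pow,
        inv_one, mul_one]
    rw [geom_sum_eq hu, hur, sub_self, zero_div]

noncomputable def rotAvg (r m : ℕ) : ℂ[X] →ₗ[ℂ] ℂ[X] :=
  (r : ℂ)⁻¹ • ∑ j ∈ range r, ((crRoot r ^ j) ^ m)⁻¹ • rotMap (crRoot r ^ j)

theorem coeff_rotAvg {r : ℕ} (hr : 1 ≤ r) (m : ℕ) (p : ℂ[X]) (k : ℕ) :
    (rotAvg r m p).coeff k = if k % r = m % r then p.coeff k else 0 := by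
  have hsum := sum_crRoot_pow_mul_inv hr k m
  simp only [rotAvg, LinearMap.smul_apply, LinearMap.coe_sum, Finset.sum_apply, coeff_smul,
    finsetSum_coeff, coeff_rotMap, smul_eq_mul]
  rw [show ∑ j ∈ range r, ((crRoot r ^ j) ^ m)⁻¹ * ((crRoot r ^ j) ^ k * p.coeff k) =
      (∑ j ∈ range r, (crRoot r ^ j) ^ k * ((crRoot r ^ j) ^ m)⁻¹) * p.coeff k by
    rw [sum_mul]; exact sum_congr rfl fun j _ => by ring, hsum]
  split_ifs
  · rw [← mul_assoc, inv_mul_cancel₀ (by exact_mod_cast (show r ≠ 0 by omega)), one_mul]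
  · simp

theorem CrFixed.rotAvg_mem {r : ℕ} {x : Submodule ℂ ℂ[X]} (hx : CrFixed r x) (m : ℕ) {p : ℂ[X]}
    (hp : p ∈ x) : rotAvg r m p ∈ x := by
  simp only [rotAvg, LinearMap.smul_apply, LinearMap.coe_sum, Finset.sum_apply]
  refine x.smul_mem _ (x.sum_mem fun j hj => x.smul_mem _ ?_)
  rw [← (crFixed_iff_map_eq x).mp hx j (mem_range.mp hj)]
  exact Submodule.mem_map_of_mem hp

section PivotBasis

variable {K : Type*} [Field K]

structure IsPivotBasis (x : Submodule K K[X]) {d : ℕ} (f : Fin d → K[X]) (δ : Fin d → ℕ) :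
    Prop where
  span_eq : Submodule.span K (Set.range f) = x
  coeff_pivot : ∀ i i', (f i).coeff (δ i') = if i = i' then 1 else 0

namespace IsPivotBasis

variable {x : Submodule K K[X]} {d : ℕ} {f : Fin d → K[X]} {δ : Fin d → ℕ}

theorem mem (hf : IsPivotBasis x f δ) (i : Fin d) : f i ∈ x :=
  hf.span_eq ▸ Submodule.subset_span ⟨i, rfl⟩

theorem coeff_pivot_sum_smul (hf : IsPivotBasis x f δ) (c : Fin d → K) (i' : Fin d) :
    (∑ i, c i • f i).coeff (δ i') = c i' := by
  simp [finsetSum_coeff, hf.coeff_pivot]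

theorem sum_coeff_pivot_smul (hf : IsPivotBasis x f δ) {p : K[X]} (hp : p ∈ x) :
    ∑ i, p.coeff (δ i) • f i = p := by
  obtain ⟨c, rfl⟩ := (Submodule.mem_span_range_iff_exists_fun K).mp (hf.span_eq ▸ hp)
  simp only [hf.coeff_pivot_sum_smul]

theorem eq_of_coeff_pivot_eq (hf : IsPivotBasis x f δ) {p q : K[X]} (hp : p ∈ x) (hq : q ∈ x)
    (h : ∀ i, p.coeff (δ i) = q.coeff (δ i)) : p = q := by
  rw [← hf.sum_coeff_pivot_smul hp, ← hf.sum_coeff_pivot_smul hq]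
  simp only [h]

theorem linearIndependent (hf : IsPivotBasis x f δ) : LinearIndependent K f :=
  Fintype.linearIndependent_iff.mpr fun c hc i => by
    simpa using hf.coeff_pivot_sum_smul c i ▸ congrArg (coeff · (δ i)) hc

theorem injective (hf : IsPivotBasis x f δ) : Function.Injective δ := fun i i' h => by
  by_contra hne
  have := hf.coeff_pivot i i'
  rw [← h, hf.coeff_pivot i i, if_pos rfl, if_neg hne] at this
  exact one_ne_zero this

end IsPivotBasis

theorem isPivotBasis_X_pow {d : ℕ} {J : Fin d → ℕ} (hJ : Function.Injective J) :
    IsPivotBasis (Submodule.span K (Set.range fun i => (X : K[X]) ^ J i)) (fun i => X ^ J i) J :=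
  ⟨rfl, fun i i' => by simp [coeff_X_pow, hJ.eq_iff, eq_comm]⟩

theorem inf_ker_lcoeff_sup_span_singleton {x : Submodule K K[X]} {g : K[X]} {k : ℕ} (hg : g ∈ x)
    (hgk : g.coeff k = 1) : x ⊓ LinearMap.ker (lcoeff K k) ⊔ K ∙ g = x := by
  refine le_antisymm (sup_le inf_le_left ((Submodule.span_singleton_le_iff_mem _ _).mpr hg))
    fun p hp => Submodule.mem_sup.mpr ⟨p - p.coeff k • g, ?_, p.coeff k • g,
      Submodule.smul_mem _ _ (Submodule.mem_span_singleton_self g), sub_add_cancel _ _⟩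
  exact ⟨x.sub_mem hp (x.smul_mem _ hg), by simp [hgk]⟩

theorem finrank_inf_ker_lcoeff_add_one {x : Submodule K K[X]} [FiniteDimensional K x] {g : K[X]}
    {k : ℕ} (hg : g ∈ x) (hgk : g.coeff k = 1) :
    Module.finrank K ↥(x ⊓ LinearMap.ker (lcoeff K k)) + 1 = Module.finrank K x := by
  have hg0 : g ≠ 0 := fun h => by simp [h] at hgk
  have hdisj : Disjoint (x ⊓ LinearMap.ker (lcoeff K k)) (K ∙ g) :=
    (Submodule.disjoint_span_singleton' hg0).mpr fun h => by simp [hgk] at h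
  have : FiniteDimensional K ↥(x ⊓ LinearMap.ker (lcoeff K k)) :=
    Submodule.finiteDimensional_of_le inf_le_left
  have := Submodule.finrank_sup_add_finrank_inf_eq (x ⊓ LinearMap.ker (lcoeff K k)) (K ∙ g)
  rw [inf_ker_lcoeff_sup_span_singleton hg hgk, hdisj.eq_bot, finrank_bot,
    finrank_span_singleton hg0] at this
  omega

theorem exists_isPivotBasis : ∀ (d : ℕ) (x : Submodule K K[X]) [FiniteDimensional K x],
    Module.finrank K x = d → ∃ (f : Fin d → K[X]) (δ : Fin d → ℕ), IsPivotBasis x f δ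
  | 0, x, _, hx => ⟨Fin.elim0, Fin.elim0, by
      simp [Submodule.finrank_eq_zero.mp hx], fun i => i.elim0⟩
  | d + 1, x, _, hx => by
    obtain ⟨p, hpx, hp0⟩ := (Submodule.ne_bot_iff x).mp fun h => by
      have := Submodule.finrank_eq_zero.mpr h; omega
    set k := p.natDegree
    have hgk : (p.leadingCoeff⁻¹ • p).coeff k = 1 := by
      rw [coeff_smul, smul_eq_mul, ← leadingCoeff, inv_mul_cancel₀ (leadingCoeff_ne_zero.mpr hp0)]
    set x' := x ⊓ LinearMap.ker (lcoeff K k)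
    have hx'x : x' ≤ x := inf_le_left
    have : FiniteDimensional K x' := Submodule.finiteDimensional_of_le hx'x
    have hrank : Module.finrank K x' + 1 = Module.finrank K x :=
      finrank_inf_ker_lcoeff_add_one (x.smul_mem p.leadingCoeff⁻¹ hpx) hgk
    obtain ⟨f', δ', hf'⟩ := exists_isPivotBasis d x' (by omega)
    have hf'k : ∀ i, (f' i).coeff k = 0 := fun i => (hf'.mem i).2
    set g := p.leadingCoeff⁻¹ • p - ∑ i, (p.leadingCoeff⁻¹ • p).coeff (δ' i) • f' i
    have hgx : g ∈ x := x.sub_mem (x.smul_mem _ hpx)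
      (x.sum_mem fun i _ => x.smul_mem _ (hx'x (hf'.mem i)))
    have hgk' : g.coeff k = 1 := by simp [g, finsetSum_coeff, hf'k, hgk]
    have hgδ' : ∀ i, g.coeff (δ' i) = 0 := fun i => by
      simp only [g, coeff_sub, hf'.coeff_pivot_sum_smul, sub_self]
    refine ⟨Fin.cons g f', Fin.cons k δ', ?_, fun i i' => ?_⟩
    · rw [Fin.range_cons, Submodule.span_insert, hf'.span_eq, sup_comm,
        inf_ker_lcoeff_sup_span_singleton hgx hgk']
    · cases i using Fin.cases <;> cases i' using Fin.cases <;>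
        simp [hgk', hgδ', hf'k, hf'.coeff_pivot, Fin.succ_ne_zero, (Fin.succ_ne_zero _).symm]

end PivotBasis

/-! ### Plücker coordinates of fixed points -/

section Plucker

def coeffMatrix {R : Type*} [Semiring R] {d : ℕ} (f : Fin d → R[X]) (J : Fin d → ℕ) :
    Matrix (Fin d) (Fin d) R :=
  Matrix.of fun i i' => (f i).coeff (J i')

theorem det_coeffMatrix_ne_zero_of_mem_span {K : Type*} [Field K] {d : ℕ} {f g : Fin d → K[X]}
    (hg : ∀ i, g i ∈ Submodule.span K (Set.range f)) {J : Fin d → ℕ}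
    (hdet : (coeffMatrix g J).det ≠ 0) : (coeffMatrix f J).det ≠ 0 := by
  choose M hM using fun i => (Submodule.mem_span_range_iff_exists_fun K).mp (hg i)
  have : coeffMatrix g J = Matrix.of M * coeffMatrix f J := by
    ext i i'
    simp [coeffMatrix, Matrix.mul_apply, ← hM i, finsetSum_coeff]
  rw [this, Matrix.det_mul] at hdet
  exact right_ne_zero_of_mul hdet

theorem Matrix.exists_perm_apply_ne_zero_of_det_ne_zero {n R : Type*} [Fintype n] [DecidableEq n]
    [CommRing R] {M : Matrix n n R} (h : M.det ≠ 0) : ∃ σ : Equiv.Perm n, ∀ i, M (σ i) i ≠ 0 := by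
  by_contra! hcon
  refine h ((Matrix.det_apply M).trans (Finset.sum_eq_zero fun σ _ => ?_))
  obtain ⟨i, hi⟩ := hcon σ
  rw [Finset.prod_eq_zero (f := fun j => M (σ j) j) (mem_univ i) hi, smul_zero]

namespace IsPivotBasis

variable {x : Submodule ℂ ℂ[X]} {d : ℕ} {f : Fin d → ℂ[X]} {δ : Fin d → ℕ}

theorem coeffMatrix_self (hf : IsPivotBasis x f δ) : coeffMatrix f δ = 1 := by
  ext i i'
  simp [coeffMatrix, hf.coeff_pivot, Matrix.one_apply]

theorem pluckerNonzero_iff (hf : IsPivotBasis x f δ) {w : ℕ} (lam : PartitionIn d w) :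
    PluckerNonzero d lam x ↔ (coeffMatrix f (pluckerIndex lam)).det ≠ 0 := by
  refine ⟨fun ⟨g, _, hg, hdet⟩ => det_coeffMatrix_ne_zero_of_mem_span (fun i => ?_) hdet,
    fun hdet => ⟨f, hf.linearIndependent, hf.span_eq, hdet⟩⟩
  rw [hf.span_eq, ← hg]
  exact Submodule.subset_span ⟨i, rfl⟩

theorem pluckerNonzero_ofInjective (hf : IsPivotBasis x f δ) {w : ℕ} {ε : Fin d → ℕ}
    (hε : Function.Injective ε) (hεw : ∀ i, ε i < d + w) (hdet : (coeffMatrix f ε).det ≠ 0) :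
    PluckerNonzero d (PartitionIn.ofInjective ε hε hεw) x := by
  obtain ⟨σ, hσ⟩ := PartitionIn.exists_perm_comp_eq_pluckerIndex_ofInjective ε hε hεw
  rw [hf.pluckerNonzero_iff, ← hσ,
    show coeffMatrix f (ε ∘ σ) = (coeffMatrix f ε).submatrix id σ from rfl,
    Matrix.det_permute']
  exact mul_ne_zero (Int.cast_ne_zero.mpr (Units.ne_zero _)) hdet

variable {r : ℕ}

theorem crFixed_iff (hr : 1 ≤ r) (hf : IsPivotBasis x f δ) :
    CrFixed r x ↔ ∀ i k, (f i).coeff k ≠ 0 → k % r = δ i % r := by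
  refine ⟨fun hfix i k hk => ?_, fun h => hf.span_eq ▸ crFixed_span_of_coeff hr f δ h⟩
  have hproj : rotAvg r (δ i) (f i) = f i :=
    hf.eq_of_coeff_pivot_eq (hfix.rotAvg_mem _ (hf.mem i)) (hf.mem i) fun i' => by
      rw [coeff_rotAvg hr, hf.coeff_pivot]
      by_cases hii' : i = i' <;> simp [hii']
  by_contra hne
  exact hk (by rw [← hproj, coeff_rotAvg hr, if_neg hne])

theorem runnerCount_betaSet (hr : 1 ≤ r) (hf : IsPivotBasis x f δ) (hfix : CrFixed r x) {w : ℕ}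
    {lam : PartitionIn d w} (hlam : PluckerNonzero d lam x) (t : ℕ) :
    runnerCount r lam.betaSet t = #{i | δ i % r = t} := by
  obtain ⟨σ, hσ⟩ :=
    Matrix.exists_perm_apply_ne_zero_of_det_ne_zero ((hf.pluckerNonzero_iff lam).mp hlam)
  have hmod : ∀ i, pluckerIndex lam i % r = δ (σ i) % r :=
    fun i => (hf.crFixed_iff hr).mp hfix (σ i) _ (hσ i)
  rw [runnerCount, lam.betaSet_eq_image_pluckerIndex, filter_image,
    card_image_of_injective _ lam.pluckerIndex_strictMono.injective]
  exact card_equiv σ fun i => by simp [hmod]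

theorem det_coeffMatrix_update (hf : IsPivotBasis x f δ) (i : Fin d) (k : ℕ) :
    (coeffMatrix f (Function.update δ i k)).det = (f i).coeff k := by
  have : coeffMatrix f (Function.update δ i k) =
      (1 : Matrix (Fin d) (Fin d) ℂ).updateCol i fun i₁ => (f i₁).coeff k := by
    ext i₁ i'
    by_cases hi' : i' = i
    · simp [coeffMatrix, hi']
    · simp [coeffMatrix, hi', hf.coeff_pivot, Matrix.one_apply]
  rw [this, ← Matrix.cramer_apply, Matrix.cramer_one]
  rfl

end IsPivotBasis

end Plucker

theorem Function.Injective.update_of_forall_ne {ι α : Type*} [DecidableEq ι] {f : ι → α}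
    (hf : Function.Injective f) (i : ι) {a : α} (ha : ∀ j, f j ≠ a) :
    Function.Injective (Function.update f i a) := by
  intro j j' h
  by_cases hj : j = i <;> by_cases hj' : j' = i <;>
    simp_all [Function.update_apply, hf.eq_iff, eq_comm]

theorem lt_of_mem_degreeLT_of_coeff_ne_zero {R : Type*} [Semiring R] {p : R[X]} {n k : ℕ}
    (hp : p ∈ degreeLT R n) (hk : p.coeff k ≠ 0) : k < n := by
  by_contra! hle
  exact hk (coeff_eq_zero_of_degree_lt ((mem_degreeLT.mp hp).trans_le (by exact_mod_cast hle)))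

namespace IsGrPoint

variable {n d r : ℕ} {x : Submodule ℂ ℂ[X]}

theorem exists_isPivotBasis (hx : IsGrPoint n d x) :
    ∃ (f : Fin d → ℂ[X]) (δ : Fin d → ℕ), IsPivotBasis x f δ ∧ ∀ i, δ i < n := by
  have : FiniteDimensional ℂ (degreeLT ℂ n) := Module.Finite.equiv (degreeLTEquiv ℂ n).symm
  have : FiniteDimensional ℂ x := Submodule.finiteDimensional_of_le hx.1
  obtain ⟨f, δ, hf⟩ := _root_.exists_isPivotBasis d x hx.2
  exact ⟨f, δ, hf, fun i => lt_of_mem_degreeLT_of_coeff_ne_zero (hx.1 (hf.mem i))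
    (by simp [hf.coeff_pivot])⟩

theorem exists_pluckerNonzero (hx : IsGrPoint n d x) :
    ∃ lam : PartitionIn d (n - d), PluckerNonzero d lam x := by
  obtain ⟨f, δ, hf, hδ⟩ := hx.exists_isPivotBasis
  exact ⟨_, hf.pluckerNonzero_ofInjective hf.injective (fun i => by have := hδ i; omega)
    (by simp [hf.coeffMatrix_self])⟩

theorem ribbonEquiv_of_crFixed (hr : 1 ≤ r) (hx : IsGrPoint n d x) (hfix : CrFixed r x) {w : ℕ}
    {lam mu : PartitionIn d w} (hlam : PluckerNonzero d lam x) (hmu : PluckerNonzero d mu x) :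
    RibbonEquiv r lam mu := by
  obtain ⟨f, δ, hf, -⟩ := hx.exists_isPivotBasis
  exact (PartitionIn.ribbonEquiv_iff_runnerCount_eq hr lam mu).mpr fun t => by
    rw [hf.runnerCount_betaSet hr hfix hlam, hf.runnerCount_betaSet hr hfix hmu]

theorem crFixed_of_forall_ribbonEquiv (hr : 1 ≤ r) (hx : IsGrPoint n d x)
    (H : ∀ lam mu : PartitionIn d (n - d),
      PluckerNonzero d lam x → PluckerNonzero d mu x → RibbonEquiv r lam mu) :
    CrFixed r x := by
  obtain ⟨f, δ, hf, hδ⟩ := hx.exists_isPivotBasis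
  refine (hf.crFixed_iff hr).mpr fun i k hk => ?_
  by_contra hne
  have hkδ : ∀ j, δ j ≠ k := fun j hj => by
    by_cases hji : j = i
    · exact hne (by rw [← hj, hji])
    · exact hk (by rw [← hj, hf.coeff_pivot, if_neg (Ne.symm hji)])
  have hkn : k < n := lt_of_mem_degreeLT_of_coeff_ne_zero (hx.1 (hf.mem i)) hk
  have hε := hf.injective.update_of_forall_ne i hkδ
  have hpivot := hf.pluckerNonzero_ofInjective (w := n - d) hf.injective
    (fun j => by have := hδ j; omega) (by simp [hf.coeffMatrix_self])
  have hupdate := hf.pluckerNonzero_ofInjective (w := n - d) hε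
    (fun j => by
      rw [Function.update_apply]; split_ifs
      · omega
      · have := hδ j; omega)
    (by rwa [hf.det_coeffMatrix_update])
  have hsum := (H _ _ hpivot hupdate).sum_betaSet_mod hr
  rw [PartitionIn.betaSet_ofInjective, PartitionIn.betaSet_ofInjective,
    sum_image fun _ _ _ _ h => hf.injective h, sum_image fun _ _ _ _ h => hε h,
    sum_update_of_mem (mem_univ i), ← add_sum_erase _ _ (mem_univ i), sdiff_singleton_eq_erase]
    at hsum
  exact hne (Nat.ModEq.add_right_cancel' _ hsum).symm

end IsGrPoint

theorem exists_crFixed_pluckerNonzero {n d r : ℕ} (hr : 1 ≤ r) (hdn : d ≤ n)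
    (kappa : PartitionIn d (n - d)) :
    ∃ x, IsGrPoint n d x ∧ CrFixed r x ∧ PluckerNonzero d kappa x := by
  have hf := isPivotBasis_X_pow (K := ℂ) kappa.pluckerIndex_strictMono.injective
  refine ⟨_, ⟨Submodule.span_le.mpr ?_, ?_⟩, (hf.crFixed_iff hr).mpr fun i k hk => ?_,
    (hf.pluckerNonzero_iff kappa).mpr (by simp [hf.coeffMatrix_self])⟩
  · rintro _ ⟨i, rfl⟩
    have := kappa.pluckerIndex_lt i
    rw [SetLike.mem_coe, mem_degreeLT, degree_X_pow]
    exact_mod_cast (by omega : pluckerIndex kappa i < n)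
  · rw [finrank_span_eq_card hf.linearIndependent, Fintype.card_fin]
  · rw [coeff_X_pow] at hk
    rw [show k = pluckerIndex kappa i by by_contra h; simp [h] at hk]

theorem statement17_general (d n r : ℕ) (hdn : d < n) (hr : 1 ≤ r) :
    (∀ x : Submodule ℂ (Polynomial ℂ), IsGrPoint n d x →
      (CrFixed r x ↔
        ∀ lam mu : PartitionIn d (n - d),
          PluckerNonzero d lam x → PluckerNonzero d mu x → RibbonEquiv r lam mu)) ∧
    (∀ kappa : PartitionIn d (n - d), IsRCore r kappa →
      {x : Submodule ℂ (Polynomial ℂ) |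
        IsGrPoint n d x ∧ CrFixed r x ∧
        ∀ lam : PartitionIn d (n - d),
          PluckerNonzero d lam x → RibbonEquiv r lam kappa}.Nonempty) ∧
    (∀ x : Submodule ℂ (Polynomial ℂ), IsGrPoint n d x → CrFixed r x →
      ∃! kappa : PartitionIn d (n - d), IsRCore r kappa ∧
        ∀ lam : PartitionIn d (n - d),
          PluckerNonzero d lam x → RibbonEquiv r lam kappa) := by
  refine ⟨fun x hx => ⟨fun hfix _ _ => hx.ribbonEquiv_of_crFixed hr hfix,
    hx.crFixed_of_forall_ribbonEquiv hr⟩, fun kappa _ => ?_, fun x hx hfix => ?_⟩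
  · obtain ⟨x, hx, hfix, hkappa⟩ := exists_crFixed_pluckerNonzero hr hdn.le kappa
    exact ⟨x, hx, hfix, fun lam hlam => hx.ribbonEquiv_of_crFixed hr hfix hlam hkappa⟩
  · obtain ⟨lam₀, hlam₀⟩ := hx.exists_pluckerNonzero
    obtain ⟨kappa, hkappa, hequiv⟩ := PartitionIn.exists_isRCore_ribbonEquiv hr lam₀
    refine ⟨kappa, ⟨hkappa, fun lam hlam =>
      .trans _ _ _ (hx.ribbonEquiv_of_crFixed hr hfix hlam hlam₀) hequiv⟩, ?_⟩
    rintro kappa' ⟨hkappa', hequiv'⟩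
    exact PartitionIn.IsRCore.eq_of_ribbonEquiv hr hkappa' hkappa
      (.trans _ _ _ (.symm _ _ (hequiv' lam₀ hlam₀)) hequiv)

/-- Let `x ∈ X` and `P_x = {λ ∈ Λ : p_λ(x) ≠ 0}`.  Then `x` is
fixed by `C_r` if and only if all partitions in `P_x` have the same `r`-core
(i.e. are pairwise equivalent under the equivalence generated by `r`-ribbon
removal).  Moreover, for each `r`-core `κ ∈ Λ` the set
`X^{r,κ} = {C_r`-fixed `x` : every `λ ∈ P_x` has `r`-core `κ}` is nonempty, and
these sets partition `X^r`: every `C_r`-fixed point lies in `X^{r,κ}` for a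
unique `r`-core `κ`. -/
theorem statement17 (d n r : ℕ) (hd : 0 < d) (hdn : d < n) (hr : 1 ≤ r) :
    (∀ x : Submodule ℂ (Polynomial ℂ), IsGrPoint n d x →
      (CrFixed r x ↔
        ∀ lam mu : PartitionIn d (n - d),
          PluckerNonzero d lam x → PluckerNonzero d mu x → RibbonEquiv r lam mu)) ∧
    (∀ kappa : PartitionIn d (n - d), IsRCore r kappa →
      {x : Submodule ℂ (Polynomial ℂ) |
        IsGrPoint n d x ∧ CrFixed r x ∧
        ∀ lam : PartitionIn d (n - d),
          PluckerNonzero d lam x → RibbonEquiv r lam kappa}.Nonempty) ∧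
    (∀ x : Submodule ℂ (Polynomial ℂ), IsGrPoint n d x → CrFixed r x →
      ∃! kappa : PartitionIn d (n - d), IsRCore r kappa ∧
        ∀ lam : PartitionIn d (n - d),
          PluckerNonzero d lam x → RibbonEquiv r lam kappa) :=
  statement17_general d n r hdn hr
end
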